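/- arXiv:1707.09389 — 16 statements merged into one kernel-verified Lean document; each statement's English description precedes it below -/
import Mathlib

section
/- Let R be a ring, a ∈ R quasinilpotent (i.e., 1 + ax is a unit for every x commuting with a), and e an idempotent commuting with a. Then ae is quasinilpotent. -/
/-- `a` is quasinilpotent: `1 + a*x` is a unit for every `x` commuting with `a`. -/
def IsQuasinilpotent {R : Type*} [Ring R] (a : R) : Prop :=
  ∀ x : R, x * a = a * x → IsUnit (1 + a * x)

/-- `x` lies in the double commutant of `a`. -/
def InDoubleCommutant {R : Type*} [Ring R] (a x : R) : Prop :=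
  ∀ y : R, y * a = a * y → x * y = y * x

/-- `b` is a generalized Hirano inverse of `a`. -/
def IsGHInverse {R : Type*} [Ring R] (a b : R) : Prop :=
  b * a * b = b ∧ InDoubleCommutant a b ∧ IsQuasinilpotent (a ^ 2 - a * b)

theorem stmt0 {R : Type*} [Ring R] (a e : R)
    (ha : IsQuasinilpotent a) (he : e * e = e) (hcomm : e * a = a * e) :
    IsQuasinilpotent (a * e) := by
  intro x hx
  have key : a * (e * x * e) = a * e * x := by
    calc a * (e * x * e) = (a * e * x) * e := by noncomm_ring
    _ = (x * (a * e)) * e := by rw [hx]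
    _ = x * (a * (e * e)) := by noncomm_ring
    _ = x * (a * e) := by rw [he]
    _ = a * e * x := hx
  have hcomm2 : (e * x * e) * a = a * (e * x * e) := by
    calc (e * x * e) * a = e * (x * (a * e)) := by rw [← hcomm]; noncomm_ring
    _ = e * (a * e * x) := by rw [hx]
    _ = (e * a) * e * x := by noncomm_ring
    _ = a * (e * e) * x := by rw [hcomm]; noncomm_ring
    _ = a * e * x := by rw [he]
    _ = a * (e * x * e) := key.symm
  have := ha (e * x * e) hcomm2
  rwa [key] at this
end

section
/- Let R be a ring and a ∈ R. If a has a generalized Hirano inverse (i.e., there exists b ∈ R with bab = b, b ∈ comm²(a), and a² − ab quasinilpotent), then a has a generalized Drazin inverse; in fact the same element b satisfies bab = b, b ∈ comm²(a), and a − a²b quasinilpotent. -/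
private lemma aux_unit {M : Type*} [Monoid M] {c d : M}
    (h1 : IsUnit (c * d)) (h2 : IsUnit (d * c)) : IsUnit c := by
  obtain ⟨u, hu⟩ := h1
  obtain ⟨v, hv⟩ := h2
  have hr : c * (d * ↑u⁻¹) = 1 := by rw [← mul_assoc, ← hu, Units.mul_inv]
  have hl : (↑v⁻¹ * d) * c = 1 := by rw [mul_assoc, ← hv, Units.inv_mul]
  have heq : (↑v⁻¹ * d : M) = d * ↑u⁻¹ := by
    conv_lhs => rw [← mul_one (↑v⁻¹ * d : M), ← hr, ← mul_assoc, hl, one_mul]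
  exact ⟨⟨c, d * ↑u⁻¹, hr, heq ▸ hl⟩, rfl⟩

theorem stmt1 {R : Type*} [Ring R] (a b : R) (h : IsGHInverse a b) :
    b * a * b = b ∧ InDoubleCommutant a b ∧ IsQuasinilpotent (a - a ^ 2 * b) := by
  obtain ⟨hbab, hcomm, hq⟩ := h
  refine ⟨hbab, hcomm, ?_⟩
  have hba : b * a = a * b := hcomm a rfl
  have cba : Commute b a := hba
  have cab : Commute a b := cba.symm
  have he : (a * b) * (a * b) = a * b := by
    rw [mul_assoc, ← mul_assoc b a b, hbab]
  set q : R := a ^ 2 - a * b with hqdef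
  set f : R := 1 - a * b with hfdef
  set w : R := a - a ^ 2 * b with hwdef
  have hef : (a * b) * f = 0 := by
    rw [hfdef, mul_sub, mul_one, he, sub_self]
  have hff : f * f = f := by
    conv_lhs => rw [hfdef]
    rw [sub_mul, one_mul, hef, sub_zero]
  have hqf : q * f = (a * a) * f := by
    conv_lhs => rw [hqdef]
    rw [sub_mul, hef, sub_zero, sq]
  have cfa : Commute f a :=
    (Commute.one_left a).sub_left ((Commute.refl a).mul_left cba)
  have cfb : Commute f b :=
    (Commute.one_left b).sub_left (cab.mul_left (Commute.refl b))
  have cfq : Commute f q :=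
    (cfa.pow_right 2).sub_right (cfa.mul_right cfb)
  have hw : w = a * f := by
    rw [hwdef, hfdef, mul_sub, mul_one, sq, mul_assoc]
  have hw2 : w * w = q * f := by
    rw [hw, hqf, mul_assoc, ← mul_assoc f a f, cfa.eq, mul_assoc, hff, ← mul_assoc]
  intro x hx
  have hxw : Commute x w := hx
  have cxxww : Commute (x * x) (w * w) :=
    (hxw.mul_right hxw).mul_left (hxw.mul_right hxw)
  -- the conjugated element z commutes with q
  set z : R := f * (x * x) * f with hzdef
  have hwwf : (w * w) * f = w * w := by
    rw [hw2, mul_assoc, hff]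
  have hfww : f * (w * w) = w * w := by
    rw [hw2, ← mul_assoc, cfq.eq, mul_assoc, hff]
  have hqz : q * z = (w * w) * (x * x) := by
    rw [hzdef, ← mul_assoc, ← mul_assoc, ← hw2, ← cxxww.eq, mul_assoc, hwwf, cxxww.eq]
  have hzq : z * q = (w * w) * (x * x) := by
    rw [hzdef, mul_assoc, mul_assoc, cfq.eq, ← hw2, cxxww.eq, ← mul_assoc, hfww]
  have hu : IsUnit (1 - (w * w) * (x * x)) := by
    have := hq (-z) (by rw [neg_mul, mul_neg, hzq, hqz])
    rwa [mul_neg, hqz, ← sub_eq_add_neg] at this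
  have hwx2 : (w * x) * (w * x) = (w * w) * (x * x) := by
    rw [mul_assoc, ← mul_assoc x w x, hxw.eq, ← mul_assoc, ← mul_assoc, mul_assoc (w * w)]
  have h₁ : (1 + w * x) * (1 - w * x) = 1 - (w * w) * (x * x) := by
    rw [← hwx2]; noncomm_ring
  have h₂ : (1 - w * x) * (1 + w * x) = 1 - (w * w) * (x * x) := by
    rw [← hwx2]; noncomm_ring
  exact aux_unit (h₁ ▸ hu) (h₂ ▸ hu)
end

section
/- Let R be a ring and a ∈ R. Then a has a generalized Hirano inverse if and only if there exists b ∈ R such that b = ba²b, b ∈ comm²(a), and a² − a²b is quasinilpotent. -/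
theorem stmt3 {R : Type*} [Ring R] (a : R) :
    (∃ b, IsGHInverse a b) ↔
      ∃ b : R, b = b * a ^ 2 * b ∧ InDoubleCommutant a b ∧
        IsQuasinilpotent (a ^ 2 - a ^ 2 * b) := by
  constructor
  · rintro ⟨b, hbab, hcomm, hq⟩
    have hba : b * a = a * b := hcomm a rfl
    have h2 : b * a * (b * a) = b * a := by rw [← mul_assoc, hbab]
    refine ⟨b * b, ?_, ?_, ?_⟩
    · have : b * b * a ^ 2 * (b * b) = b * b := by
        calc b * b * a ^ 2 * (b * b) = b * (b * a * (a * b)) * b := by noncomm_ring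
          _ = b * (b * a * (b * a)) * b := by rw [hba]
          _ = b * (b * a) * b := by rw [h2]
          _ = b * (b * a * b) := by rw [mul_assoc]
          _ = b * b := by rw [hbab]
      exact this.symm
    · intro y hy
      have hby := hcomm y hy
      rw [mul_assoc, hby, ← mul_assoc, hby, mul_assoc]
    · have h3 : a ^ 2 * (b * b) = a * b := by
        calc a ^ 2 * (b * b) = a * (a * b) * b := by noncomm_ring
          _ = a * (b * a) * b := by rw [hba]
          _ = a * (b * a * b) := by rw [mul_assoc, mul_assoc]
          _ = a * b := by rw [hbab]
      rw [h3]
      exact hq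
  · rintro ⟨b, hb, hcomm, hq⟩
    refine ⟨a * b, ?_, ?_, ?_⟩
    · calc a * b * a * (a * b) = a * (b * a ^ 2 * b) := by noncomm_ring
        _ = a * b := by rw [← hb]
    · intro y hy
      have hby := hcomm y hy
      rw [mul_assoc, hby, ← mul_assoc, ← hy, mul_assoc]
    · have h3 : a * (a * b) = a ^ 2 * b := by noncomm_ring
      rw [h3]
      exact hq
end

section
/- Let R be a ring and a ∈ R. Then a has a generalized Hirano inverse if and only if there exists an idempotent p ∈ comm²(a) such that a² − p is quasinilpotent. -/
theorem stmt4 {R : Type*} [Ring R] (a : R) :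
    (∃ b, IsGHInverse a b) ↔
      ∃ p : R, p * p = p ∧ InDoubleCommutant a p ∧ IsQuasinilpotent (a ^ 2 - p) := by
  constructor
  · rintro ⟨b, hbab, hcomm, hqn⟩
    have hba : b * a = a * b := hcomm a rfl
    refine ⟨a * b, ?_, ?_, hqn⟩
    · have h1 : a * b * (a * b) = a * (b * a * b) := by noncomm_ring
      rw [h1, hbab]
    · intro y hy
      have h1 : b * y = y * b := hcomm y hy
      calc a * b * y = a * (b * y) := by rw [mul_assoc]
        _ = a * (y * b) := by rw [h1]
        _ = (a * y) * b := by rw [mul_assoc]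
        _ = (y * a) * b := by rw [hy]
        _ = y * (a * b) := by rw [mul_assoc]
  · rintro ⟨p, hpp, hpc, hqn⟩
    have hpa : p * a = a * p := hpc a rfl
    have hpa2 : p * a ^ 2 = a ^ 2 * p := by
      rw [sq, ← mul_assoc, hpa, mul_assoc, hpa, ← mul_assoc]
    have hwp : p * (a ^ 2 - p) = (a ^ 2 - p) * p := by
      rw [mul_sub, sub_mul, hpa2, hpp]
    obtain ⟨U, hU⟩ := hqn p hwp
    set v : R := ↑U⁻¹ with hv
    have key : ∀ y : R, y * a = a * y → y * v = v * y := by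
      intro y hy
      have h1 : Commute y p := (hpc y hy).symm
      have h2 : Commute y (a ^ 2) := by
        show y * a ^ 2 = a ^ 2 * y
        rw [sq, ← mul_assoc, hy, mul_assoc, hy, ← mul_assoc]
      have hcu : Commute y (1 + (a ^ 2 - p) * p) :=
        (Commute.one_right y).add_right ((h2.sub_right h1).mul_right h1)
      have hcU : Commute y (↑U : R) := by rw [hU]; exact hcu
      exact hcU.units_inv_right
    have hva : v * a = a * v := (key a rfl).symm
    have hvp : v * p = p * v := (key p hpa).symm
    -- sorting lemmas (canonical order: y, v, a, p)
    have sAP : ∀ z : R, p * (a * z) = a * (p * z) := fun z => by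
      rw [← mul_assoc, hpa, mul_assoc]
    have sVP : ∀ z : R, p * (v * z) = v * (p * z) := fun z => by
      rw [← mul_assoc, ← hvp, mul_assoc]
    have sVA : ∀ z : R, a * (v * z) = v * (a * z) := fun z => by
      rw [← mul_assoc, ← hva, mul_assoc]
    have sPP : ∀ z : R, p * (p * z) = p * z := fun z => by
      rw [← mul_assoc, hpp]
    have sVP0 : p * v = v * p := hvp.symm
    have sVA0 : a * v = v * a := hva.symm
    -- key computation: v * (a * (a * p)) = p
    have hup : (↑U : R) * p = a ^ 2 * p := by
      rw [hU, add_mul, one_mul, mul_assoc, hpp, sub_mul, hpp]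
      abel
    have hvu : v * ↑U = (1 : R) := U.inv_mul
    have hva2p : v * (a * (a * p)) = p := by
      have h : v * (a ^ 2 * p) = p := by rw [← hup, ← mul_assoc, hvu, one_mul]
      rw [sq, mul_assoc] at h
      exact h
    refine ⟨v * a * p, ?_, ?_, ?_⟩
    · -- bab = b
      have hba : v * a * p * a = p := by
        simp only [mul_assoc, sAP, sVP, sVA, sPP, hpp, hpa, sVP0, sVA0]
        exact hva2p
      rw [show v * a * p * a * (v * a * p) = (v * a * p * a) * (v * a * p) from rfl, hba]
      simp only [mul_assoc, sAP, sVP, sVA, sPP, hpp, hpa, sVP0, sVA0]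
    · -- double commutant
      intro y hy
      have h1 : p * y = y * p := hpc y hy
      have h2 : v * y = y * v := (key y hy).symm
      have sYP : ∀ z : R, p * (y * z) = y * (p * z) := fun z => by
        rw [← mul_assoc, h1, mul_assoc]
      have sYA : ∀ z : R, a * (y * z) = y * (a * z) := fun z => by
        rw [← mul_assoc, ← hy, mul_assoc]
      have sYV : ∀ z : R, v * (y * z) = y * (v * z) := fun z => by
        rw [← mul_assoc, h2, mul_assoc]
      simp only [mul_assoc, sYP, sYA, sYV, h1, hy.symm, h2]
    · -- quasinilpotent
      have hab : a * (v * a * p) = p := by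
        simp only [mul_assoc, sVA]
        exact hva2p
      rw [hab]
      exact hqn
end

section
/- Let R be a ring and a ∈ R. Then a has a generalized Hirano inverse if and only if there exists b ∈ R such that ab is an idempotent, b ∈ comm²(a), and a² − ab is quasinilpotent. -/
theorem stmt5 {R : Type*} [Ring R] (a : R) :
    (∃ b, IsGHInverse a b) ↔
      ∃ b : R, (a * b) * (a * b) = a * b ∧ InDoubleCommutant a b ∧
        IsQuasinilpotent (a ^ 2 - a * b) := by
  constructor
  · rintro ⟨b, hb, hcomm, hq⟩
    refine ⟨b, ?_, hcomm, hq⟩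
    calc (a * b) * (a * b) = a * (b * a * b) := by simp only [mul_assoc]
    _ = a * b := by rw [hb]
  · rintro ⟨b, hid, hcomm, hq⟩
    have hba : b * a = a * b := hcomm a rfl
    have hc : ∀ x : R, b * (a * x) = a * (b * x) := fun x => by
      rw [← mul_assoc, hba, mul_assoc]
    have hac : a * (b * a * b) = a * b := by
      calc a * (b * a * b) = (a * b) * (a * b) := by simp only [mul_assoc]
      _ = a * b := hid
    refine ⟨b * a * b, ?_, ?_, ?_⟩
    · calc (b * a * b) * a * (b * a * b)
          = b * ((a * b) * (a * b) * (a * b)) := by simp only [mul_assoc, hc]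
      _ = b * (a * b) := by rw [hid, hid]
      _ = b * a * b := by simp only [mul_assoc]
    · intro y hy
      have h1 := hcomm y hy
      calc (b * a * b) * y = b * (a * (b * y)) := by simp only [mul_assoc]
      _ = b * (a * (y * b)) := by rw [h1]
      _ = b * (y * (a * b)) := by rw [← mul_assoc a y, ← hy, mul_assoc]
      _ = (b * y) * (a * b) := by rw [mul_assoc]
      _ = y * (b * a * b) := by rw [h1]; simp only [mul_assoc]
    · rw [hac]; exact hq
end

section
/- Let R be a ring. If a ∈ R has a generalized Hirano inverse, then there exists a unique idempotent p ∈ R such that pa = ap and a² − p is quasinilpotent, where additionally the existing idempotent lies in comm²(a). -/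
private lemma qn_unit_sub {R : Type*} [Ring R] {u v : R}
    (hu : IsQuasinilpotent u) (hv : IsQuasinilpotent v)
    (huv : u * v = v * u) : IsUnit (1 + u - v) := by
  have h1 : IsUnit (1 - v) := by
    have := hv (-1) (by noncomm_ring)
    simpa [← sub_eq_add_neg] using this
  obtain ⟨w, hw⟩ := h1
  have hc : (w : R) * u = u * (w : R) := by
    rw [hw, sub_mul, mul_sub, one_mul, mul_one, huv]
  have hinv : (↑w⁻¹ : R) * u = u * ↑w⁻¹ := by
    calc (↑w⁻¹ : R) * u = ↑w⁻¹ * (u * ↑w) * ↑w⁻¹ := by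
          rw [mul_assoc, mul_assoc, w.mul_inv, mul_one]
      _ = ↑w⁻¹ * (↑w * u) * ↑w⁻¹ := by rw [hc]
      _ = (↑w⁻¹ * ↑w) * (u * ↑w⁻¹) := by noncomm_ring
      _ = u * ↑w⁻¹ := by rw [w.inv_mul, one_mul]
  have h2 : IsUnit (1 + u * ↑w⁻¹) := hu (↑w⁻¹) hinv
  have h3 : (1 + u * ↑w⁻¹) * (w : R) = 1 + u - v := by
    rw [add_mul, one_mul, mul_assoc, w.inv_mul, mul_one, hw]
    abel
  have := h2.mul w.isUnit
  rwa [h3] at this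

private lemma uniq_aux {R : Type*} [Ring R] {a p q : R}
    (hpp : p * p = p) (hpdc : InDoubleCommutant a p) (hpa : p * a = a * p)
    (hu : IsQuasinilpotent (a ^ 2 - p))
    (hqq : q * q = q) (hqa : q * a = a * q)
    (hv : IsQuasinilpotent (a ^ 2 - q)) : p = q := by
  have hpq : p * q = q * p := hpdc q hqa
  have ha2q : a ^ 2 * q = q * a ^ 2 := by
    rw [pow_two, mul_assoc, ← hqa, ← mul_assoc, ← hqa, mul_assoc]
  have ha2p : a ^ 2 * p = p * a ^ 2 := by
    rw [pow_two, mul_assoc, ← hpa, ← mul_assoc, ← hpa, mul_assoc]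
  have huv : (a ^ 2 - p) * (a ^ 2 - q) = (a ^ 2 - q) * (a ^ 2 - p) := by
    simp only [sub_mul, mul_sub]
    rw [ha2q, ha2p, hpq]
    abel
  have w1 : IsUnit (1 + (a ^ 2 - p) - (a ^ 2 - q)) := qn_unit_sub hu hv huv
  have w2 : IsUnit (1 + (a ^ 2 - q) - (a ^ 2 - p)) := qn_unit_sub hv hu huv.symm
  have e1 : 1 + (a ^ 2 - p) - (a ^ 2 - q) = 1 - p + q := by abel
  have e2 : 1 + (a ^ 2 - q) - (a ^ 2 - p) = 1 - q + p := by abel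
  rw [e1] at w1
  rw [e2] at w2
  have k1 : (1 - p + q) * (p - p * q) = (1 - p + q) * 0 := by
    rw [mul_zero]
    have expand : (1 - p + q) * (p - p * q)
        = p - p * q - p * p + p * (p * q) + q * p - q * (p * q) := by noncomm_ring
    have t1 : p * (p * q) = p * q := by rw [← mul_assoc, hpp]
    have t2 : q * (p * q) = p * q := by rw [← mul_assoc, ← hpq, mul_assoc, hqq]
    rw [expand, t1, t2, hpp, ← hpq]
    abel
  have k2 : (1 - q + p) * (q - q * p) = (1 - q + p) * 0 := by
    rw [mul_zero]
    have expand : (1 - q + p) * (q - q * p)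
        = q - q * p - q * q + q * (q * p) + p * q - p * (q * p) := by noncomm_ring
    have t1 : q * (q * p) = q * p := by rw [← mul_assoc, hqq]
    have t2 : p * (q * p) = q * p := by rw [← mul_assoc, hpq, mul_assoc, hpp]
    rw [expand, t1, t2, hqq, hpq]
    abel
  have hpq0 : p - p * q = 0 := w1.mul_left_cancel k1
  have hqp0 : q - q * p = 0 := w2.mul_left_cancel k2
  have h1 : p = p * q := by rw [sub_eq_zero] at hpq0; exact hpq0
  have h2 : q = q * p := by rw [sub_eq_zero] at hqp0; exact hqp0
  rw [h1, hpq, ← h2]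

theorem stmt6 {R : Type*} [Ring R] (a : R) (h : ∃ b, IsGHInverse a b) :
    ∃ p : R, p * p = p ∧ InDoubleCommutant a p ∧ p * a = a * p ∧
      IsQuasinilpotent (a ^ 2 - p) ∧
      ∀ q : R, q * q = q → q * a = a * q → IsQuasinilpotent (a ^ 2 - q) → p = q := by
  obtain ⟨b, hbab, hbc, hqn⟩ := h
  have hba : b * a = a * b := hbc a rfl
  have hpp : a * b * (a * b) = a * b := by
    calc a * b * (a * b) = a * (b * a * b) := by noncomm_ring
      _ = a * b := by rw [hbab]
  have hpdc : InDoubleCommutant a (a * b) := by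
    intro y hy
    have hby : b * y = y * b := hbc y hy
    calc a * b * y = a * (y * b) := by rw [mul_assoc, hby]
      _ = (a * y) * b := by rw [mul_assoc]
      _ = (y * a) * b := by rw [hy]
      _ = y * (a * b) := by rw [mul_assoc]
  have hpa : a * b * a = a * (a * b) := by
    calc a * b * a = a * (b * a) := by rw [mul_assoc]
      _ = a * (a * b) := by rw [hba]
  exact ⟨a * b, hpp, hpdc, hpa, hqn,
    fun q hqq hqa hv => uniq_aux hpp hpdc hpa hqn hqq hqa hv⟩
end

section
/- Let A ∈ M₂(ℤ). Then A has a generalized Hirano inverse if and only if A² = 0, or (I₂ − A²)² = 0, or A² = A⁴. -/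
lemma quasinil_of_sq {R : Type*} [Ring R] (q : R) (h : q * q = 0) : IsQuasinilpotent q := by
  intro x hx
  have key : q * x * (q * x) = 0 := by
    calc q * x * (q * x) = q * (x * q) * x := by noncomm_ring
      _ = q * (q * x) * x := by rw [hx]
      _ = q * q * (x * x) := by noncomm_ring
      _ = 0 := by rw [h, zero_mul]
  refine isUnit_iff_exists.mpr ⟨1 - q * x, ?_, ?_⟩
  · calc (1 + q * x) * (1 - q * x) = 1 - q * x * (q * x) := by noncomm_ring
      _ = 1 := by rw [key, sub_zero]
  · calc (1 - q * x) * (1 + q * x) = 1 - q * x * (q * x) := by noncomm_ring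
      _ = 1 := by rw [key, sub_zero]

lemma quasi_facts (q : Matrix (Fin 2) (Fin 2) ℤ) (hq : IsQuasinilpotent q) :
    q 0 0 + q 1 1 = 0 ∧ q 0 0 * q 1 1 - q 0 1 * q 1 0 = 0 ∧ q * q = 0 := by
  have key : ∀ t : ℤ, IsUnit (1 + t • q) := by
    intro t
    have hc : (t • (1 : Matrix (Fin 2) (Fin 2) ℤ)) * q = q * (t • 1) := by
      rw [smul_mul_assoc, one_mul, mul_smul_comm, mul_one]
    have h := hq _ hc
    rwa [mul_smul_comm, mul_one] at h
  have hdet : ∀ t : ℤ, (1 + t • q).det = 1 + t * (q 0 0 + q 1 1) +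
      t ^ 2 * (q 0 0 * q 1 1 - q 0 1 * q 1 0) := by
    intro t
    rw [Matrix.det_fin_two]
    simp only [Matrix.add_apply, Matrix.smul_apply, Matrix.one_apply, smul_eq_mul]
    norm_num
    ring
  have hval : ∀ t : ℤ, (1 + t • q).det = 1 ∨ (1 + t • q).det = -1 := by
    intro t
    have := (Matrix.isUnit_iff_isUnit_det _).mp (key t)
    exact Int.isUnit_iff.mp this
  have h1 := hval 1; rw [hdet 1] at h1
  have h2 := hval 2; rw [hdet 2] at h2
  have h3 := hval (-2); rw [hdet (-2)] at h3
  norm_num at h1 h2 h3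
  have hT0 : q 0 0 + q 1 1 = 0 := by
    rcases h1 with h|h <;> rcases h2 with h'|h' <;> rcases h3 with h''|h'' <;> omega
  have hD0 : q 0 0 * q 1 1 - q 0 1 * q 1 0 = 0 := by
    rcases h1 with h|h <;> rcases h2 with h'|h' <;> rcases h3 with h''|h'' <;> omega
  refine ⟨hT0, hD0, ?_⟩
  ext i j
  fin_cases i <;> fin_cases j <;>
    simp only [Fin.mk_zero, Fin.mk_one, Matrix.mul_apply, Fin.sum_univ_two, Matrix.zero_apply]
  · linear_combination q 0 0 * hT0 - hD0
  · linear_combination q 0 1 * hT0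
  · linear_combination q 1 0 * hT0
  · linear_combination q 1 1 * hT0 - hD0

lemma scalar_key (a b c d p r s w : ℤ)
    (he00 : p = p*p + r*s) (he01 : r = p*r + r*w) (he10 : s = s*p + w*s) (he11 : w = s*r + w*w)
    (hc01 : p*b + r*d = a*r + b*w) (hc10 : s*a + w*c = c*p + d*s)
    (hT : (a*a+b*c-p) + (d*d+b*c-w) = 0)
    (hDet : (a*a+b*c-p)*(d*d+b*c-w) - (a*b+b*d-r)*(c*a+d*c-s) = 0) :
    (a*a+b*c = p ∧ a*b+b*d = r ∧ c*a+d*c = s ∧ c*b+d*d = w)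
    ∨ (p = 0 ∧ r = 0 ∧ s = 0 ∧ w = 0 ∧ a*a+b*c = 0 ∧ a*b+b*d = 0 ∧ c*a+d*c = 0 ∧ c*b+d*d = 0)
    ∨ (p = 1 ∧ r = 0 ∧ s = 0 ∧ w = 1) := by
  by_cases hτ : p + w = 1
  · left
    set D := p - w with hD
    set δ := a - d with hδ
    set c0 := p*d - a*w with hc0
    set M := δ*δ + 2*δ*c0 - D*D with hM
    have F1 : D*b = δ*r := by linear_combination hc01
    have F2 : D*c = δ*s := by linear_combination -hc10
    have F3 : r*s = p - p*p := by linear_combination -he00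
    have F3' : r*s = w - w*w := by linear_combination -he11
    have S1 : D*D*(a*a+b*c-p) = p*M + c0*c0 := by
      linear_combination (D*c)*F1 + (δ*r)*F2 + (δ*δ)*F3
    have S2 : D*D*(a*b+b*d-r) = r*M := by
      linear_combination (D*(a+d))*F1 + (δ*r*δ)*hτ
    have S3 : D*D*(c*a+d*c-s) = s*M := by
      linear_combination (D*(a+d))*F2 + (δ*s*δ)*hτ
    have S4 : D*D*(c*b+d*d-w) = w*M + c0*c0 := by
      linear_combination (D*b)*F2 + (δ*s)*F1 + (δ*δ)*F3'
    have SM : M = -2*(c0*c0) := by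
      linear_combination D*D*hT - S1 - S4 - M*hτ
    have SDet : c0*c0*M + c0^4 = 0 := by
      linear_combination (D^2*D^2)*hDet - (D*D*(d*d+b*c-w))*S1 - (p*M+c0*c0)*S4
        + (D*D*(c*a+d*c-s))*S2 + (r*M)*S3 + (M*M)*F3 - (c0*c0*M + p*M*M)*hτ
    have hc00 : c0 = 0 := by
      have h4 : c0^4 = 0 := by linear_combination -SDet + (c0*c0)*SM
      exact pow_eq_zero_iff (by norm_num) |>.mp h4
    have hM0 : M = 0 := by rw [hc00] at SM; simpa using SM
    have hDne : D ≠ 0 := by omega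
    refine ⟨?_, ?_, ?_, ?_⟩
    · have h := S1; rw [hM0, hc00] at h; simp at h
      rcases h with h | h
      · exact absurd h hDne
      · linarith
    · have h := S2; rw [hM0] at h; simp at h
      rcases h with h | h
      · exact absurd h hDne
      · linarith
    · have h := S3; rw [hM0] at h; simp at h
      rcases h with h | h
      · exact absurd h hDne
      · linarith
    · have h := S4; rw [hM0, hc00] at h; simp at h
      rcases h with h | h
      · exact absurd h hDne
      · linarith
  · right
    have hτ' : p + w - 1 ≠ 0 := by omega
    have hr : r = 0 := by
      have : r*(p+w-1) = 0 := by linear_combination -he01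
      exact (mul_eq_zero.mp this).resolve_right hτ'
    have hs : s = 0 := by
      have : s*(p+w-1) = 0 := by linear_combination -he10
      exact (mul_eq_zero.mp this).resolve_right hτ'
    have hpw : p = w := by
      have : (p-w)*(p+w-1) = 0 := by linear_combination he11 - he00
      have := (mul_eq_zero.mp this).resolve_right hτ'
      omega
    have hp2 : p*(p-1) = 0 := by
      rw [hr] at he00; linear_combination -he00
    rcases mul_eq_zero.mp hp2 with hp | hp
    · left
      have hw : w = 0 := by omega
      subst hp hr hs
      rw [hw] at hT hDet
      have had : a*d - b*c = 0 := by
        have : (a*d - b*c)^2 = 0 := by linear_combination hDet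
        exact pow_eq_zero_iff (by norm_num) |>.mp this
      have hsum : a + d = 0 := by
        have : (a+d)^2 = 0 := by linear_combination hT + 2*had
        exact pow_eq_zero_iff (by norm_num) |>.mp this
      refine ⟨rfl, rfl, rfl, hw, ?_, ?_, ?_, ?_⟩
      · linear_combination a*hsum - had
      · linear_combination b*hsum
      · linear_combination c*hsum
      · linear_combination d*hsum - had
    · right
      have hp1 : p = 1 := by omega
      exact ⟨hp1, hr, hs, by omega⟩

theorem stmt7 (A : Matrix (Fin 2) (Fin 2) ℤ) :
    (∃ B, IsGHInverse A B) ↔ A ^ 2 = 0 ∨ (1 - A ^ 2) ^ 2 = 0 ∨ A ^ 2 = A ^ 4 := by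
  constructor
  · rintro ⟨B, hbab, hdc, hqn⟩
    have hBA : B * A = A * B := hdc A rfl
    obtain ⟨E, hE⟩ : ∃ E, A * B = E := ⟨_, rfl⟩
    have he : E * E = E := by
      rw [← hE]
      calc (A*B)*(A*B) = A*(B*A*B) := by noncomm_ring
        _ = A*B := by rw [hbab]
    have hAe : E * A = A * E := by rw [← hE, mul_assoc, hBA]
    rw [hE] at hqn
    obtain ⟨hT, hDet, hqq⟩ := quasi_facts _ hqn
    have he00 := congrFun (congrFun he 0) 0
    have he01 := congrFun (congrFun he 0) 1
    have he10 := congrFun (congrFun he 1) 0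
    have he11 := congrFun (congrFun he 1) 1
    have hc01 := congrFun (congrFun hAe 0) 1
    have hc10 := congrFun (congrFun hAe 1) 0
    simp only [Matrix.mul_apply, Fin.sum_univ_two] at he00 he01 he10 he11 hc01 hc10
    simp only [Matrix.sub_apply, pow_two, Matrix.mul_apply, Fin.sum_univ_two] at hT hDet
    rcases scalar_key (A 0 0) (A 0 1) (A 1 0) (A 1 1) (E 0 0) (E 0 1) (E 1 0) (E 1 1)
      (by linear_combination -he00) (by linear_combination -he01)
      (by linear_combination -he10) (by linear_combination -he11)
      (by linear_combination hc01) (by linear_combination hc10)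
      (by linear_combination hT) (by linear_combination hDet) with
      ⟨h1, h2, h3, h4⟩ | ⟨_, _, _, _, h1, h2, h3, h4⟩ | ⟨hp, hr, hs, hw⟩
    · right; right
      have hA2E : A ^ 2 = E := by
        ext i j
        fin_cases i <;> fin_cases j <;>
          simp only [pow_two, Matrix.mul_apply, Fin.sum_univ_two, Fin.mk_zero, Fin.mk_one]
        · linear_combination h1
        · linear_combination h2
        · linear_combination h3
        · linear_combination h4
      calc A ^ 2 = E := hA2E
        _ = E * E := he.symm
        _ = A ^ 2 * A ^ 2 := by rw [hA2E]
        _ = A ^ 4 := by noncomm_ring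
    · left
      ext i j
      fin_cases i <;> fin_cases j <;>
        simp only [pow_two, Matrix.mul_apply, Fin.sum_univ_two, Fin.mk_zero, Fin.mk_one,
          Matrix.zero_apply]
      · linear_combination h1
      · linear_combination h2
      · linear_combination h3
      · linear_combination h4
    · right; left
      have hE1 : E = 1 := by
        ext i j
        fin_cases i <;> fin_cases j <;>
          simp only [Matrix.one_apply, Fin.mk_zero, Fin.mk_one] <;> norm_num
        exacts [hp, hr, hs, hw]
      have key : (1 - A ^ 2) ^ 2 = (A ^ 2 - E) * (A ^ 2 - E) := by
        rw [hE1]; noncomm_ring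
      rw [key, hqq]
  · rintro (h | h | h)
    · refine ⟨0, by simp, fun y _ => by simp, ?_⟩
      have h0 : A ^ 2 - A * 0 = A ^ 2 := by simp
      rw [h0]
      exact quasinil_of_sq _ (by rw [h, mul_zero])
    · refine ⟨A * (2 - A ^ 2), ?_, ?_, ?_⟩
      · have key : A * (2 - A ^ 2) * A * (A * (2 - A ^ 2)) =
            A * (2 - A ^ 2) + (A ^ 3 - 2 * A) * (1 - A ^ 2) ^ 2 := by noncomm_ring
        rw [key, h, mul_zero, add_zero]
      · intro y hy
        have hc : Commute A y := hy.symm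
        have e : A * (2 - A ^ 2) = 2 • A - A ^ 3 := by noncomm_ring
        rw [e]
        exact ((hc.smul_left 2).sub_left (hc.pow_left 3))
      · apply quasinil_of_sq
        have e : A ^ 2 - A * (A * (2 - A ^ 2)) = A ^ 4 - A ^ 2 := by noncomm_ring
        rw [e]
        have key : (A ^ 4 - A ^ 2) * (A ^ 4 - A ^ 2) = (A ^ 2) ^ 2 * (1 - A ^ 2) ^ 2 := by
          noncomm_ring
        rw [key, h, mul_zero]
    · refine ⟨A ^ 3, ?_, ?_, ?_⟩
      · have e : A ^ 3 * A * A ^ 3 = A ^ 3 * A ^ 4 := by noncomm_ring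
        rw [e, ← h]
        calc A ^ 3 * A ^ 2 = A * A ^ 4 := by noncomm_ring
          _ = A * A ^ 2 := by rw [← h]
          _ = A ^ 3 := by noncomm_ring
      · intro y hy
        exact ((Commute.pow_right (hy : Commute y A) 3).symm : Commute (A ^ 3) y)
      · apply quasinil_of_sq
        have e : A ^ 2 - A * A ^ 3 = A ^ 2 - A ^ 4 := by noncomm_ring
        rw [e, h, sub_self, zero_mul]
end

section
/- Let R be a commutative local ring, and let A ∈ M₂(R) with det(A) ∈ J(R) and tr(A²) ∈ J(R). Then A has a generalized Hirano inverse; in fact A² is quasinilpotent in M₂(R). -/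
open Matrix

theorem IsNilpotent.isQuasinilpotent {S : Type*} [Ring S] {a : S} (h : IsNilpotent a) :
    IsQuasinilpotent a :=
  fun _ hx => (Commute.isNilpotent_mul_right hx.symm h).isUnit_one_add

theorem IsQuasinilpotent.of_map {S T : Type*} [Ring S] [Ring T] (f : S →+* T) [IsLocalHom f]
    {a : S} (h : IsQuasinilpotent (f a)) : IsQuasinilpotent a := fun x hx =>
  isUnit_of_map_unit f _ <| by
    simpa only [map_add, map_one, map_mul] using h (f x) (by rw [← map_mul, hx, map_mul])

theorem IsQuasinilpotent.isGHInverse_zero {S : Type*} [Ring S] {a : S}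
    (h : IsQuasinilpotent (a ^ 2)) : IsGHInverse a 0 :=
  ⟨by simp, fun _ _ => by simp, by simpa using h⟩

instance RingHom.isLocalHom_mapMatrix {n R S : Type*} [Fintype n] [DecidableEq n]
    [CommRing R] [CommRing S] (f : R →+* S) [IsLocalHom f] :
    IsLocalHom (f.mapMatrix : Matrix n n R →+* Matrix n n S) where
  map_nonunit M hM := by
    rw [isUnit_iff_isUnit_det] at hM ⊢
    exact isUnit_of_map_unit f _ (by rwa [RingHom.map_det])

theorem Matrix.sq_eq_trace_smul_sub_det_smul_one {R : Type*} [CommRing R]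
    (M : Matrix (Fin 2) (Fin 2) R) :
    M ^ 2 = M.trace • M - M.det • (1 : Matrix (Fin 2) (Fin 2) R) := by
  ext i j
  fin_cases i <;> fin_cases j <;>
    simp only [sq, mul_apply, Fin.sum_univ_two, trace_fin_two, det_fin_two, Matrix.sub_apply,
      Matrix.smul_apply, smul_eq_mul, Fin.zero_eta, Fin.mk_one, one_apply_eq, ne_eq, zero_ne_one,
      one_ne_zero, not_false_eq_true, one_apply_ne] <;> ring

theorem Matrix.isNilpotent_of_trace_eq_zero_of_det_eq_zero {R : Type*} [CommRing R]
    {M : Matrix (Fin 2) (Fin 2) R} (ht : M.trace = 0) (hd : M.det = 0) : IsNilpotent M :=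
  ⟨2, by rw [sq_eq_trace_smul_sub_det_smul_one, ht, hd, zero_smul, zero_smul, sub_zero]⟩

theorem stmt8 {R : Type*} [CommRing R] [IsLocalRing R] (A : Matrix (Fin 2) (Fin 2) R)
    (hdet : A.det ∈ Ideal.jacobson (⊥ : Ideal R))
    (htr : (A ^ 2).trace ∈ Ideal.jacobson (⊥ : Ideal R)) :
    (∃ B, IsGHInverse A B) ∧ IsQuasinilpotent (A ^ 2) := by
  rw [IsLocalRing.jacobson_eq_maximalIdeal ⊥ bot_ne_top, ← IsLocalRing.residue_eq_zero_iff]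
    at hdet htr
  have hq : IsQuasinilpotent (A ^ 2) := by
    refine .of_map (IsLocalRing.residue R).mapMatrix (IsNilpotent.isQuasinilpotent ?_)
    refine isNilpotent_of_trace_eq_zero_of_det_eq_zero ?_ ?_
    · rwa [RingHom.mapMatrix_apply, ← AddMonoidHom.map_trace]
    · rw [← RingHom.map_det, det_pow, map_pow, hdet, zero_pow two_ne_zero]
  exact ⟨⟨0, hq.isGHInverse_zero⟩, hq⟩
end

section
/- Let R be a commutative local ring, and let A ∈ M₂(R) with det(A)² ∈ 1 + J(R) and tr(A²) ∈ 2 + J(R). Then A has a generalized Hirano inverse; in fact I₂ − A² is quasinilpotent in M₂(R). -/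
private lemma ch2 {R : Type*} [CommRing R] (M : Matrix (Fin 2) (Fin 2) R) :
    M * M = M.trace • M - M.det • (1 : Matrix (Fin 2) (Fin 2) R) := by
  ext i j
  fin_cases i <;> fin_cases j <;>
    simp [Matrix.mul_apply, Fin.sum_univ_two, Matrix.trace_fin_two, Matrix.det_fin_two,
      Matrix.one_apply] <;> ring

private lemma trsq2 {R : Type*} [CommRing R] (M : Matrix (Fin 2) (Fin 2) R) :
    (M * M).trace = M.trace ^ 2 - 2 * M.det := by
  simp [Matrix.trace_fin_two, Matrix.det_fin_two, Matrix.mul_apply, Fin.sum_univ_two]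
  ring

private lemma det_one_add2 {R : Type*} [CommRing R] (M : Matrix (Fin 2) (Fin 2) R) :
    (1 + M).det = 1 + M.trace + M.det := by
  simp [Matrix.det_fin_two, Matrix.trace_fin_two, Matrix.one_apply]
  ring

theorem stmt9 {R : Type*} [CommRing R] [IsLocalRing R] (A : Matrix (Fin 2) (Fin 2) R)
    (hdet : A.det ^ 2 - 1 ∈ Ideal.jacobson (⊥ : Ideal R))
    (htr : (A ^ 2).trace - 2 ∈ Ideal.jacobson (⊥ : Ideal R)) :
    (∃ B, IsGHInverse A B) ∧ IsQuasinilpotent ((1 : Matrix (Fin 2) (Fin 2) R) - A ^ 2) := by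
  set m := IsLocalRing.maximalIdeal R with hm
  rw [IsLocalRing.jacobson_eq_maximalIdeal ⊥ bot_ne_top, ← hm] at hdet htr
  have hprime : m.IsPrime := (IsLocalRing.maximalIdeal.isMaximal R).isPrime
  set N : Matrix (Fin 2) (Fin 2) R := 1 - A ^ 2 with hN
  -- trace and det of N lie in m
  have htrN : N.trace ∈ m := by
    have h2 : N.trace = -((A ^ 2).trace - 2) := by
      simp [hN, Matrix.trace_sub, Matrix.trace_one]
    rw [h2]; exact neg_mem htr
  have hdetN : N.det ∈ m := by
    have h1 : N = 1 + (-(A ^ 2)) := by rw [hN, sub_eq_add_neg]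
    have h2 : N.det = (A.det ^ 2 - 1) - ((A ^ 2).trace - 2) := by
      rw [h1, det_one_add2]
      rw [Matrix.det_neg, Matrix.trace_neg, Matrix.det_pow]
      simp
      ring
    rw [h2]; exact sub_mem hdet htr
  -- the key: N is quasinilpotent
  have hq : IsQuasinilpotent N := by
    intro X hX
    rw [Matrix.isUnit_iff_isUnit_det]
    -- trace of N*X lies in m
    have hdNX : (N * X).det ∈ m := by
      rw [Matrix.det_mul]; exact Ideal.mul_mem_right _ _ hdetN
    have htNX : (N * X).trace ∈ m := by
      have hsq : (N * X).trace ^ 2 = ((N * X) * (N * X)).trace + 2 * (N * X).det := by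
        rw [trsq2]; ring
      have hcomm : (N * X) * (N * X) = (N * N) * (X * X) := by
        calc N * X * (N * X) = N * (X * N) * X := by noncomm_ring
        _ = N * (N * X) * X := by rw [hX]
        _ = N * N * (X * X) := by noncomm_ring
      have htr2 : ((N * X) * (N * X)).trace ∈ m := by
        rw [hcomm, ch2, Matrix.sub_mul, Matrix.smul_mul, Matrix.smul_mul, Matrix.one_mul,
          Matrix.trace_sub, Matrix.trace_smul, Matrix.trace_smul]
        exact sub_mem (Ideal.mul_mem_right _ _ htrN) (Ideal.mul_mem_right _ _ hdetN)
      have : (N * X).trace ^ 2 ∈ m := by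
        rw [hsq]; exact add_mem htr2 (Ideal.mul_mem_left _ _ hdNX)
      exact hprime.mem_of_pow_mem 2 this
    have hd : (1 + N * X).det = 1 + ((N * X).trace + (N * X).det) := by
      rw [det_one_add2]; ring
    have hmem : (N * X).trace + (N * X).det ∈ m := add_mem htNX hdNX
    rw [hd]
    by_contra hnu
    have : (1 : R) ∈ m := by
      have h1 : (1 : R) + ((N * X).trace + (N * X).det) ∈ m :=
        (IsLocalRing.mem_maximalIdeal _).mpr hnu
      have := sub_mem h1 hmem
      simpa using this
    exact hprime.ne_top (Ideal.eq_top_of_isUnit_mem _ this isUnit_one)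
  refine ⟨?_, hq⟩
  -- A ^ 2 = 1 - N is a unit, hence A is a unit
  have hA2 : IsUnit (A ^ 2) := by
    have := hq (-1) (by simp)
    simpa [hN] using this
  have hA : IsUnit A := (isUnit_pow_iff (two_ne_zero)).mp hA2
  have hdA : IsUnit A.det := (Matrix.isUnit_iff_isUnit_det A).mp hA
  have hAB : A * A⁻¹ = 1 := Matrix.mul_nonsing_inv A hdA
  have hBA : A⁻¹ * A = 1 := Matrix.nonsing_inv_mul A hdA
  refine ⟨A⁻¹, ?_, ?_, ?_⟩
  · rw [Matrix.mul_assoc, hAB, Matrix.mul_one]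
  · intro y hy
    calc A⁻¹ * y = A⁻¹ * y * (A * A⁻¹) := by rw [hAB, Matrix.mul_one]
    _ = A⁻¹ * (y * A) * A⁻¹ := by noncomm_ring
    _ = A⁻¹ * (A * y) * A⁻¹ := by rw [hy]
    _ = (A⁻¹ * A) * (y * A⁻¹) := by noncomm_ring
    _ = y * A⁻¹ := by rw [hBA, Matrix.one_mul]
  · have heq : A ^ 2 - A * A⁻¹ = -N := by rw [hAB, hN]; noncomm_ring
    rw [heq]
    intro x hx
    have hx' : (-x) * N = N * (-x) := by
      have : x * N = N * x := by
        have := hx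
        simpa [neg_mul, mul_neg, neg_inj] using this
      simp [this]
    have := hq (-x) hx'
    simpa using this
end

section
/- Let A = [[1,2],[3,4]] over the localization ℤ₍₂₎ of ℤ at the prime 2. Then A has no generalized Hirano inverse in M₂(ℤ₍₂₎). -/
instance : (Ideal.span {(2 : ℤ)}).IsPrime := by
  rw [Ideal.span_singleton_prime (by norm_num)]
  exact Int.prime_two

/-!
A matrix commuting with `A = !![1, 2; 3, 4]` lies in `ℤ₍₂₎[A]` because `3` is a unit, and a
nonzero `x + y A` has determinant `x² + 5xy - 2y² ≠ 0`, since
`4(x² + 5xy - 2y²) = (2x + 5y)² - 33y²` and `33` is not a rational square. Hence the idempotent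
`A B` of a generalized Hirano inverse `B` is `0` or `1`. If `A B = 1` then `A` is invertible, but
`det A = -2`. If `A B = 0` then `B = B A B = 0`, so `A²` is quasinilpotent and `1 + A²` a unit,
but `det (1 + A²) = 34`.
-/
local notation "ℤ₍₂₎" => Localization.AtPrime (Ideal.span {(2 : ℤ)})

section GHInverse

variable {S : Type*} [Ring S] {a b x : S}

theorem IsQuasinilpotent.isUnit_one_add (h : IsQuasinilpotent x) : IsUnit (1 + x) := by
  simpa using h 1 (by simp)

theorem IsGHInverse.commute (h : IsGHInverse a b) : Commute b a :=
  h.2.1 a rfl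

theorem IsGHInverse.isIdempotentElem_mul (h : IsGHInverse a b) : IsIdempotentElem (a * b) := by
  rw [IsIdempotentElem, mul_assoc, ← mul_assoc b, h.1]

theorem IsGHInverse.isUnit_or_isUnit_one_add_sq (h : IsGHInverse a b)
    (hab : a * b = 0 ∨ a * b = 1) : IsUnit a ∨ IsUnit (1 + a ^ 2) := by
  rcases hab with hab | hab
  · have hb : b = 0 := by rw [← h.1, mul_assoc, hab, mul_zero]
    right
    simpa [hb] using h.2.2.isUnit_one_add
  · left
    exact ⟨⟨a, b, hab, by rw [h.commute.eq, hab]⟩, rfl⟩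

end GHInverse

namespace Matrix

variable {R : Type*} [CommRing R]

theorem exists_eq_smul_one_add_smul_of_commute {M B : Matrix (Fin 2) (Fin 2) R}
    (hM : IsUnit (M 1 0)) (h : Commute B M) : ∃ x y : R, B = x • 1 + y • M := by
  obtain ⟨u, hu⟩ := hM
  have hc : M 1 0 * ↑u⁻¹ = 1 := by rw [← hu, Units.mul_inv]
  have e := h.eq
  rw [eta_fin_two B, eta_fin_two M, mul_fin_two, mul_fin_two] at e
  have e00 := congrFun (congrFun e 0) 0
  have e10 := congrFun (congrFun e 1) 0
  simp only [of_apply, cons_val', cons_val_zero, cons_val_one, empty_val', cons_val_fin_one]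
    at e00 e10
  refine ⟨B 0 0 - B 1 0 * ↑u⁻¹ * M 0 0, B 1 0 * ↑u⁻¹, ?_⟩
  ext i j
  fin_cases i <;> fin_cases j <;>
    simp only [Fin.zero_eta, Fin.mk_one, add_apply, smul_apply, smul_eq_mul, one_apply_eq,
      one_apply_ne zero_ne_one, one_apply_ne one_ne_zero, mul_one, mul_zero, zero_add]
  · ring
  · linear_combination ↑u⁻¹ * e00 - B 0 1 * hc
  · linear_combination -B 1 0 * hc
  · linear_combination ↑u⁻¹ * e10 - (B 1 1 - B 0 0) * hc

variable {n : Type*} [Fintype n] [DecidableEq n] [Nonempty n] [IsDomain R]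

theorem isIdempotentElem_eq_zero_or_one_of_commute {M e : Matrix n n R}
    (hM : ∀ N : Matrix n n R, Commute N M → N.det = 0 → N = 0)
    (he : IsIdempotentElem e) (hcomm : Commute e M) : e = 0 ∨ e = 1 := by
  have hdet : e.det * (1 - e).det = 0 := by rw [← det_mul, he.mul_one_sub_self, det_zero]
  rcases mul_eq_zero.mp hdet with h | h
  · exact .inl (hM e hcomm h)
  · exact .inr (sub_eq_zero.mp (hM _ ((Commute.one_left M).sub_left hcomm) h)).symm

end Matrix

theorem Rat.eq_zero_of_sq_add_five_mul_sub_two_mul_sq_eq_zero {x y : ℚ}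
    (h : x ^ 2 + 5 * x * y - 2 * y ^ 2 = 0) : x = 0 ∧ y = 0 := by
  have hy : y = 0 := by
    by_contra hy
    have h33 : (33 : ℚ) = (2 * (x / y) + 5) * (2 * (x / y) + 5) := by
      field_simp
      linear_combination -4 * h
    have : IsSquare ((33 : ℕ) : ℚ) := ⟨_, by exact_mod_cast h33⟩
    exact absurd (Rat.isSquare_natCast_iff.mp this) (by decide +kernel)
  subst hy
  exact ⟨pow_eq_zero_iff two_ne_zero |>.mp (by simpa using h), rfl⟩

namespace Localization.AtPrime

theorem exists_injective_ringHom_rat_of_two : ∃ f : ℤ₍₂₎ →+* ℚ, Function.Injective f :=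
  ⟨(FractionRing.algEquiv ℤ ℚ).toRingHom.comp (algebraMap ℤ₍₂₎ (FractionRing ℤ)),
    (FractionRing.algEquiv ℤ ℚ).injective.comp (IsFractionRing.injective _ _)⟩

theorem isUnit_intCast_iff_not_two_dvd {n : ℤ} : IsUnit (n : ℤ₍₂₎) ↔ ¬2 ∣ n := by
  rw [← eq_intCast (algebraMap ℤ ℤ₍₂₎),
    IsLocalization.AtPrime.isUnit_to_map_iff _ (Ideal.span {(2 : ℤ)}), ← Ideal.mem_span_singleton]
  rfl

end Localization.AtPrime

open Localization.AtPrime Matrix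

theorem det_smul_one_add_smul_one_two_three_four {R : Type*} [CommRing R] (x y : R) :
    (x • 1 + y • !![1, 2; 3, 4] : Matrix (Fin 2) (Fin 2) R).det =
      x ^ 2 + 5 * x * y - 2 * y ^ 2 := by
  rw [one_fin_two, smul_of, smul_of, of_add_of, det_fin_two]
  simp only [of_apply, Pi.add_apply, Pi.smul_apply, cons_val_zero, cons_val_one, smul_eq_mul]
  ring

theorem eq_zero_of_commute_one_two_three_four_of_det_eq_zero {N : Matrix (Fin 2) (Fin 2) ℤ₍₂₎}
    (hN : Commute N !![1, 2; 3, 4]) (hdet : N.det = 0) : N = 0 := by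
  have h3 : IsUnit ((3 : ℤ) : ℤ₍₂₎) := isUnit_intCast_iff_not_two_dvd.mpr (by decide)
  obtain ⟨x, y, rfl⟩ := exists_eq_smul_one_add_smul_of_commute (by simpa using h3) hN
  obtain ⟨f, hf⟩ := exists_injective_ringHom_rat_of_two
  rw [det_smul_one_add_smul_one_two_three_four] at hdet
  obtain ⟨hx, hy⟩ := Rat.eq_zero_of_sq_add_five_mul_sub_two_mul_sq_eq_zero (x := f x) (y := f y)
    (by simpa only [map_sub, map_add, map_pow, map_mul, map_ofNat, map_zero] using congrArg f hdet)
  rw [hf (hx.trans (map_zero f).symm), hf (hy.trans (map_zero f).symm)]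
  simp

theorem not_isUnit_one_two_three_four :
    ¬IsUnit (!![1, 2; 3, 4] : Matrix (Fin 2) (Fin 2) ℤ₍₂₎) := by
  rw [isUnit_iff_isUnit_det, det_fin_two_of]
  exact fun h ↦ (isUnit_intCast_iff_not_two_dvd (n := 1 * 4 - 2 * 3)).mp (by exact_mod_cast h)
    (by decide)

theorem not_isUnit_one_add_one_two_three_four_sq :
    ¬IsUnit (1 + !![1, 2; 3, 4] ^ 2 : Matrix (Fin 2) (Fin 2) ℤ₍₂₎) := by
  have h : (1 + !![1, 2; 3, 4] ^ 2 : Matrix (Fin 2) (Fin 2) ℤ₍₂₎) = !![8, 10; 15, 23] := by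
    rw [sq, mul_fin_two, one_fin_two, of_add_of]
    norm_num
  rw [h, isUnit_iff_isUnit_det, det_fin_two_of]
  exact fun h ↦ (isUnit_intCast_iff_not_two_dvd (n := 8 * 23 - 10 * 15)).mp (by exact_mod_cast h)
    (by decide)

theorem stmt10 :
    ¬ ∃ B, IsGHInverse
      (!![1, 2; 3, 4] : Matrix (Fin 2) (Fin 2) (Localization.AtPrime (Ideal.span {(2 : ℤ)})))
      B := by
  rintro ⟨B, hB⟩
  have hAB := isIdempotentElem_eq_zero_or_one_of_commute
    (fun _ ↦ eq_zero_of_commute_one_two_three_four_of_det_eq_zero) hB.isIdempotentElem_mul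
    ((Commute.refl _).mul_left hB.commute)
  rcases hB.isUnit_or_isUnit_one_add_sq hAB with hA | hA
  · exact not_isUnit_one_two_three_four hA
  · exact not_isUnit_one_add_one_two_three_four_sq hA
end

section
/- Let R be a ring and a, b, c ∈ R with aba = aca. If ac has a generalized Hirano inverse d, then ba has a generalized Hirano inverse, and (ba)^h = bd²a. -/
/-- Jacobson's lemma for `1 + uv`. -/
private lemma jac_lemma {R : Type*} [Ring R] (u v : R) (h : IsUnit (1 + u * v)) :
    IsUnit (1 + v * u) := by
  obtain ⟨w, hw⟩ := h
  have h1 : (1 + u * v) * ↑w⁻¹ = 1 := by rw [← hw]; exact w.mul_inv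
  have h2 : (↑w⁻¹ : R) * (1 + u * v) = 1 := by rw [← hw]; exact w.inv_mul
  rw [isUnit_iff_exists]
  refine ⟨1 - v * ↑w⁻¹ * u, ?_, ?_⟩
  · calc (1 + v * u) * (1 - v * ↑w⁻¹ * u)
        = 1 + v * u - v * ((1 + u * v) * ↑w⁻¹) * u := by noncomm_ring
      _ = 1 + v * u - v * 1 * u := by rw [h1]
      _ = 1 := by noncomm_ring
  · calc (1 - v * ↑w⁻¹ * u) * (1 + v * u)
        = 1 + v * u - v * (↑w⁻¹ * (1 + u * v)) * u := by noncomm_ring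
      _ = 1 + v * u - v * 1 * u := by rw [h2]
      _ = 1 := by noncomm_ring

/-- If `1 + s^3` is a unit then so is `1 + s`. -/
private lemma unit_of_cube {R : Type*} [Ring R] (s : R) (h : IsUnit (1 + s * s * s)) :
    IsUnit (1 + s) := by
  obtain ⟨w, hw⟩ := h
  have hc : Commute s ↑w := by
    rw [hw]
    exact (Commute.one_right s).add_right
      (((Commute.refl s).mul_right (Commute.refl s)).mul_right (Commute.refl s))
  have hcinv : Commute s (↑w⁻¹ : R) := hc.units_inv_right
  have h1 : (1 + s * s * s) * ↑w⁻¹ = 1 := by rw [← hw]; exact w.mul_inv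
  have h2 : (↑w⁻¹ : R) * (1 + s * s * s) = 1 := by rw [← hw]; exact w.inv_mul
  have hinv1s : (↑w⁻¹ : R) * (1 + s) = (1 + s) * ↑w⁻¹ := by
    rw [mul_add, add_mul, mul_one, one_mul, hcinv.eq]
  rw [isUnit_iff_exists]
  refine ⟨(1 - s + s * s) * ↑w⁻¹, ?_, ?_⟩
  · calc (1 + s) * ((1 - s + s * s) * ↑w⁻¹)
        = (1 + s * s * s) * ↑w⁻¹ := by noncomm_ring
      _ = 1 := h1
  · calc ((1 - s + s * s) * ↑w⁻¹) * (1 + s)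
        = (1 - s + s * s) * (↑w⁻¹ * (1 + s)) := by noncomm_ring
      _ = (1 - s + s * s) * ((1 + s) * ↑w⁻¹) := by rw [hinv1s]
      _ = (↑w⁻¹ : R) * (1 + s * s * s) - ((↑w⁻¹ : R) * (1 + s * s * s)
            - (1 - s + s * s) * ((1 + s) * ↑w⁻¹)) := by noncomm_ring
      _ = 1 - (1 - (1 - s + s * s) * ((1 + s) * ↑w⁻¹)) := by rw [h2]
      _ = (1 - s + s * s) * ((1 + s) * ↑w⁻¹) := by noncomm_ring
      _ = (1 + s * s * s) * ↑w⁻¹ := by noncomm_ring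
      _ = 1 := h1

/-- Cline's formula for quasinilpotents under `a*b*a = a*c*a`. -/
private lemma quasi_cline {R : Type*} [Ring R] (a b c : R) (habc : a * b * a = a * c * a)
    (h : IsQuasinilpotent (a * c)) : IsQuasinilpotent (b * a) := by
  intro y hy
  obtain ⟨z, hz⟩ : ∃ z : R, z = y * y * y := ⟨_, rfl⟩
  have hy3 : z * (b * a) = (b * a) * z := by
    rw [hz]
    calc y * y * y * (b * a) = y * y * (y * (b * a)) := by noncomm_ring
      _ = y * y * ((b * a) * y) := by rw [hy]
      _ = y * (y * (b * a)) * y := by noncomm_ring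
      _ = y * ((b * a) * y) * y := by rw [hy]
      _ = (y * (b * a)) * (y * y) := by noncomm_ring
      _ = ((b * a) * y) * (y * y) := by rw [hy]
      _ = (b * a) * (y * y * y) := by noncomm_ring
  obtain ⟨t, ht⟩ : ∃ t : R, t = a * z * b * (a * c) := ⟨_, rfl⟩
  have habf : a * b * (a * c) = a * c * (a * c) := by
    calc a * b * (a * c) = (a * b * a) * c := by noncomm_ring
      _ = (a * c * a) * c := by rw [habc]
      _ = a * c * (a * c) := by noncomm_ring
  have hftb : a * c * (a * z * b) = a * z * b * (a * b) := by
    calc a * c * (a * z * b) = (a * c * a) * z * b := by noncomm_ring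
      _ = (a * b * a) * z * b := by rw [habc]
      _ = a * ((b * a) * z) * b := by noncomm_ring
      _ = a * (z * (b * a)) * b := by rw [← hy3]
      _ = a * z * b * (a * b) := by noncomm_ring
  have htf : t * (a * c) = (a * c) * t := by
    rw [ht]
    calc a * z * b * (a * c) * (a * c) = (a * z * b) * ((a * c) * (a * c)) := by noncomm_ring
      _ = (a * z * b) * (a * b * (a * c)) := by rw [habf]
      _ = (a * z * b * (a * b)) * (a * c) := by noncomm_ring
      _ = (a * c * (a * z * b)) * (a * c) := by rw [← hftb]
      _ = (a * c) * (a * z * b * (a * c)) := by noncomm_ring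
  have h1 : IsUnit (1 + (a * c) * t) := h t htf
  have heq1 : (a * c) * t = ((a * c) * (a * z * b)) * (a * c) := by
    rw [ht]; noncomm_ring
  rw [heq1] at h1
  have h2 : IsUnit (1 + (a * c) * ((a * c) * (a * z * b))) :=
    jac_lemma ((a * c) * (a * z * b)) (a * c) h1
  have heq2 : (a * c) * ((a * c) * (a * z * b)) = ((a * c) * ((a * c) * a) * z) * b := by
    noncomm_ring
  rw [heq2] at h2
  have h3 : IsUnit (1 + b * ((a * c) * ((a * c) * a) * z)) :=
    jac_lemma ((a * c) * ((a * c) * a) * z) b h2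
  have hss : ((b * a) * y) * ((b * a) * y) = (b * a) * ((b * a) * (y * y)) := by
    calc ((b * a) * y) * ((b * a) * y) = (b * a) * ((y * (b * a)) * y) := by noncomm_ring
      _ = (b * a) * (((b * a) * y) * y) := by rw [hy]
      _ = (b * a) * ((b * a) * (y * y)) := by noncomm_ring
  have hsss : ((b * a) * y) * ((b * a) * y) * ((b * a) * y)
      = (b * a) * ((b * a) * ((b * a) * (y * y * y))) := by
    calc ((b * a) * y) * ((b * a) * y) * ((b * a) * y)
        = ((b * a) * ((b * a) * (y * y))) * ((b * a) * y) := by rw [hss]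
      _ = (b * a) * ((b * a) * ((y * (y * (b * a))) * y)) := by noncomm_ring
      _ = (b * a) * ((b * a) * ((y * ((b * a) * y)) * y)) := by rw [hy]
      _ = (b * a) * ((b * a) * (((y * (b * a)) * y) * y)) := by noncomm_ring
      _ = (b * a) * ((b * a) * ((((b * a) * y) * y) * y)) := by rw [hy]
      _ = (b * a) * ((b * a) * ((b * a) * (y * y * y))) := by noncomm_ring
  have hs3 : b * ((a * c) * ((a * c) * a) * z)
      = ((b * a) * y) * ((b * a) * y) * ((b * a) * y) := by
    calc b * ((a * c) * ((a * c) * a) * z)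
        = b * (a * c) * (a * c * a) * z := by noncomm_ring
      _ = b * (a * c) * (a * b * a) * z := by rw [← habc]
      _ = b * ((a * c * a) * (b * a)) * z := by noncomm_ring
      _ = b * ((a * b * a) * (b * a)) * z := by rw [← habc]
      _ = (b * a) * ((b * a) * ((b * a) * z)) := by noncomm_ring
      _ = (b * a) * ((b * a) * ((b * a) * (y * y * y))) := by rw [hz]
      _ = ((b * a) * y) * ((b * a) * y) * ((b * a) * y) := by rw [← hsss]
  rw [hs3] at h3
  exact unit_of_cube ((b * a) * y) h3

theorem stmt11 {R : Type*} [Ring R] (a b c d : R) (habc : a * b * a = a * c * a)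
    (hd : IsGHInverse (a * c) d) : IsGHInverse (b * a) (b * d ^ 2 * a) := by
  obtain ⟨hdfd, hdc, hq⟩ := hd
  have hfd : d * (a * c) = (a * c) * d := hdc (a * c) rfl
  have habf : a * b * (a * c) = a * c * (a * c) := by
    calc a * b * (a * c) = (a * b * a) * c := by noncomm_ring
      _ = (a * c * a) * c := by rw [habc]
      _ = a * c * (a * c) := by noncomm_ring
  have hd2f : d * d * (a * c) = d := by
    calc d * d * (a * c) = d * (d * (a * c)) := by noncomm_ring
      _ = d * ((a * c) * d) := by rw [hfd]
      _ = d * (a * c) * d := by noncomm_ring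
      _ = d := hdfd
  have hfd2 : (a * c) * (d * d) = d := by
    calc (a * c) * (d * d) = ((a * c) * d) * d := by noncomm_ring
      _ = (d * (a * c)) * d := by rw [← hfd]
      _ = d := hdfd
  have habd : a * b * d = a * c * d := by
    calc a * b * d = a * b * ((a * c) * (d * d)) := by rw [hfd2]
      _ = (a * b * (a * c)) * (d * d) := by noncomm_ring
      _ = (a * c * (a * c)) * (d * d) := by rw [habf]
      _ = (a * c) * ((a * c) * (d * d)) := by noncomm_ring
      _ = a * c * d := by rw [hfd2]
  have habd2 : a * b * (d * d) = d := by
    calc a * b * (d * d) = (a * b * d) * d := by noncomm_ring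
      _ = (a * c * d) * d := by rw [habd]
      _ = ((a * c) * d) * d := by noncomm_ring
      _ = (d * (a * c)) * d := by rw [← hfd]
      _ = d := hdfd
  have hd2 : d ^ 2 = d * d := sq d
  refine ⟨?_, ?_, ?_⟩
  · -- (b*d^2*a) * (b*a) * (b*d^2*a) = b*d^2*a
    rw [hd2]
    calc b * (d * d) * a * (b * a) * (b * (d * d) * a)
        = b * (d * d) * (a * b) * (a * b * (d * d)) * a := by noncomm_ring
      _ = b * (d * d) * (a * b) * d * a := by rw [habd2]
      _ = b * (d * d) * (a * b * d) * a := by noncomm_ring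
      _ = b * (d * d) * (a * c * d) * a := by rw [habd]
      _ = b * (d * (d * (a * c)) * d) * a := by noncomm_ring
      _ = b * (d * ((a * c) * d) * d) * a := by rw [hfd]
      _ = b * ((d * (a * c) * d) * d) * a := by noncomm_ring
      _ = b * (d * d) * a := by rw [hdfd]
  · -- double commutant
    intro y hy
    obtain ⟨t, ht⟩ : ∃ t : R, t = a * y * b * (a * c) := ⟨_, rfl⟩
    have hftb : a * c * (a * y * b) = a * y * b * (a * b) := by
      calc a * c * (a * y * b) = (a * c * a) * y * b := by noncomm_ring
        _ = (a * b * a) * y * b := by rw [habc]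
        _ = a * ((b * a) * y) * b := by noncomm_ring
        _ = a * (y * (b * a)) * b := by rw [← hy]
        _ = a * y * b * (a * b) := by noncomm_ring
    have htf : t * (a * c) = (a * c) * t := by
      rw [ht]
      calc a * y * b * (a * c) * (a * c) = (a * y * b) * ((a * c) * (a * c)) := by noncomm_ring
        _ = (a * y * b) * (a * b * (a * c)) := by rw [habf]
        _ = (a * y * b * (a * b)) * (a * c) := by noncomm_ring
        _ = (a * c * (a * y * b)) * (a * c) := by rw [← hftb]
        _ = (a * c) * (a * y * b * (a * c)) := by noncomm_ring
    have hdt : d * t = t * d := hdc t htf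
    have hd4 : d * d = (d * d * (d * d)) * ((a * c) * (a * c)) := by
      calc d * d = (d * d * (a * c)) * (d * d * (a * c)) := by rw [hd2f]
        _ = (d * d) * (((a * c) * d) * d) * (a * c) := by noncomm_ring
        _ = (d * d) * ((d * (a * c)) * d) * (a * c) := by rw [← hfd]
        _ = (d * d) * (d * ((a * c) * d)) * (a * c) := by noncomm_ring
        _ = (d * d) * (d * (d * (a * c))) * (a * c) := by rw [← hfd]
        _ = (d * d * (d * d)) * ((a * c) * (a * c)) := by noncomm_ring
    have hd4t : (d * d * (d * d)) * t = t * (d * d * (d * d)) := by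
      calc d * d * (d * d) * t = d * (d * (d * (d * t))) := by noncomm_ring
        _ = d * (d * (d * (t * d))) := by rw [hdt]
        _ = d * (d * ((d * t) * d)) := by noncomm_ring
        _ = d * (d * ((t * d) * d)) := by rw [hdt]
        _ = d * ((d * t) * (d * d)) := by noncomm_ring
        _ = d * ((t * d) * (d * d)) := by rw [hdt]
        _ = (d * t) * (d * (d * d)) := by noncomm_ring
        _ = (t * d) * (d * (d * d)) := by rw [hdt]
        _ = t * (d * d * (d * d)) := by noncomm_ring
    rw [hd2]
    calc b * (d * d) * a * y
        = b * ((d * d * (d * d)) * ((a * c) * (a * c))) * a * y := by rw [← hd4]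
      _ = b * (d * d * (d * d)) * ((a * c) * (a * c * a)) * y := by noncomm_ring
      _ = b * (d * d * (d * d)) * ((a * c) * (a * b * a)) * y := by rw [← habc]
      _ = b * (d * d * (d * d)) * (a * c * a) * ((b * a) * y) := by noncomm_ring
      _ = b * (d * d * (d * d)) * (a * c * a) * (y * (b * a)) := by rw [← hy]
      _ = b * (d * d * (d * d)) * (a * b * a) * (y * (b * a)) := by rw [← habc]
      _ = b * (d * d * (d * d)) * a * ((b * a) * y) * (b * a) := by noncomm_ring
      _ = b * (d * d * (d * d)) * a * (y * (b * a)) * (b * a) := by rw [← hy]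
      _ = b * (d * d * (d * d)) * (a * y * b * (a * b * a)) := by noncomm_ring
      _ = b * (d * d * (d * d)) * (a * y * b * (a * c * a)) := by rw [habc]
      _ = b * ((d * d * (d * d)) * t) * a := by rw [ht]; noncomm_ring
      _ = b * (t * (d * d * (d * d))) * a := by rw [hd4t]
      _ = b * ((a * y * b * (a * c)) * (d * d * (d * d))) * a := by rw [ht]
      _ = ((b * a) * y) * (b * ((a * c) * (d * d * (d * d))) * a) := by noncomm_ring
      _ = (y * (b * a)) * (b * ((a * c) * (d * d * (d * d))) * a) := by rw [← hy]
      _ = y * (b * (a * b * (a * c)) * (d * d * (d * d)) * a) := by noncomm_ring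
      _ = y * (b * (a * c * (a * c)) * (d * d * (d * d)) * a) := by rw [habf]
      _ = y * (b * ((a * c) * (((a * c) * (d * d)) * (d * d))) * a) := by noncomm_ring
      _ = y * (b * ((a * c) * (d * (d * d))) * a) := by rw [hfd2]
      _ = y * (b * (((a * c) * (d * d)) * d) * a) := by noncomm_ring
      _ = y * (b * (d * d) * a) := by rw [hfd2]
  · -- quasinilpotency
    have key : a * b * ((a * c) - d) = a * c * ((a * c) - d) := by
      rw [mul_sub, mul_sub, habf, habd]
    have habc' : (((a * c) - d) * a) * b * (((a * c) - d) * a)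
        = (((a * c) - d) * a) * c * (((a * c) - d) * a) := by
      calc (((a * c) - d) * a) * b * (((a * c) - d) * a)
          = ((a * c) - d) * ((a * b * ((a * c) - d)) * a) := by noncomm_ring
        _ = ((a * c) - d) * ((a * c * ((a * c) - d)) * a) := by rw [key]
        _ = (((a * c) - d) * a) * c * (((a * c) - d) * a) := by noncomm_ring
    have hq' : IsQuasinilpotent ((((a * c) - d) * a) * c) := by
      have heq : (((a * c) - d) * a) * c = (a * c) ^ 2 - (a * c) * d := by
        calc (((a * c) - d) * a) * c = (a * c) * (a * c) - d * (a * c) := by noncomm_ring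
          _ = (a * c) * (a * c) - (a * c) * d := by rw [hfd]
          _ = (a * c) ^ 2 - (a * c) * d := by rw [sq]
      rw [heq]; exact hq
    have hfin := quasi_cline (((a * c) - d) * a) b c habc' hq'
    have heq2 : b * (((a * c) - d) * a) = (b * a) ^ 2 - (b * a) * (b * d ^ 2 * a) := by
      rw [hd2, sq]
      calc b * (((a * c) - d) * a)
          = b * (a * c * a) - b * (d * a) := by noncomm_ring
        _ = b * (a * b * a) - b * (d * a) := by rw [← habc]
        _ = b * (a * b * a) - b * ((a * b * (d * d)) * a) := by rw [habd2]
        _ = b * a * (b * a) - b * a * (b * (d * d) * a) := by noncomm_ring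
    rwa [heq2] at hfin
end

section
/- Let R be a ring and a, b ∈ R. If ab has a generalized Hirano inverse d, then ba has a generalized Hirano inverse and (ba)^h = bd²a (Cline's formula for generalized Hirano inverses). -/
/-- Jacobson's lemma. -/
lemma jacobson {R : Type*} [Ring R] {x y : R} (h : IsUnit (1 - x * y)) :
    IsUnit (1 - y * x) := by
  refine ⟨⟨1 - y * x, 1 + y * h.unit.inv * x, ?_, ?_⟩, rfl⟩
  · calc
      (1 - y * x) * (1 + y * (IsUnit.unit h).inv * x) =
          1 - y * x + y * ((1 - x * y) * h.unit.inv) * x := by noncomm_ring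
      _ = 1 := by simp only [Units.inv_eq_val_inv, IsUnit.mul_val_inv, mul_one, sub_add_cancel]
  · calc
      (1 + y * (IsUnit.unit h).inv * x) * (1 - y * x) =
          1 - y * x + y * (h.unit.inv * (1 - x * y)) * x := by noncomm_ring
      _ = 1 := by simp only [Units.inv_eq_val_inv, IsUnit.val_inv_mul, mul_one, sub_add_cancel]

lemma jacobson' {R : Type*} [Ring R] {x y : R} (h : IsUnit (1 + x * y)) :
    IsUnit (1 + y * x) := by
  have h1 : IsUnit (1 - (-x) * y) := by rwa [neg_mul, sub_neg_eq_add]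
  have h2 := jacobson h1
  rwa [mul_neg, sub_neg_eq_add] at h2

/-- Cline's formula for quasinilpotents. -/
lemma quasinilpotent_swap {R : Type*} [Ring R] {a b : R} (h : IsQuasinilpotent (a * b)) :
    IsQuasinilpotent (b * a) := by
  -- Claim: for every x commuting with b*a, 1 + (b*a)*(b*a)*x is a unit.
  have C : ∀ x : R, x * (b * a) = (b * a) * x → IsUnit (1 + (b * a) * (b * a) * x) := by
    intro x hx
    have hy : (a * x * b) * (a * b) = (a * b) * (a * x * b) := by
      calc (a * x * b) * (a * b) = a * (x * (b * a)) * b := by noncomm_ring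
        _ = a * ((b * a) * x) * b := by rw [hx]
        _ = (a * b) * (a * x * b) := by noncomm_ring
    have U1 : IsUnit (1 + (a * b) * (a * x * b)) := h _ hy
    have e1 : (a * b) * (a * x * b) = a * (b * a * x * b) := by noncomm_ring
    rw [e1] at U1
    have U2 : IsUnit (1 + (b * a * x * b) * a) := jacobson' U1
    have e2 : (b * a * x * b) * a = (x * (b * a)) * (b * a) := by
      rw [hx]; noncomm_ring
    rw [e2] at U2
    have U3 : IsUnit (1 + (b * a) * (x * (b * a))) := jacobson' U2
    have e3 : (b * a) * (x * (b * a)) = ((b * a) * x) * (b * a) := by noncomm_ring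
    rw [e3] at U3
    have U4 : IsUnit (1 + (b * a) * ((b * a) * x)) := jacobson' U3
    rwa [← mul_assoc] at U4
  intro x hx
  have hxx : (x * x) * (b * a) = (b * a) * (x * x) := by
    calc (x * x) * (b * a) = x * (x * (b * a)) := by noncomm_ring
      _ = x * ((b * a) * x) := by rw [hx]
      _ = (x * (b * a)) * x := by noncomm_ring
      _ = ((b * a) * x) * x := by rw [hx]
      _ = (b * a) * (x * x) := by noncomm_ring
  have hx2 : (-(x * x)) * (b * a) = (b * a) * (-(x * x)) := by
    rw [neg_mul, mul_neg, hxx]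
  have U : IsUnit (1 + (b * a) * (b * a) * (-(x * x))) := C _ hx2
  have comm2 : (b * a) * x * ((b * a) * x) = (b * a) * (b * a) * (x * x) := by
    calc (b * a) * x * ((b * a) * x) = (b * a) * (x * (b * a)) * x := by noncomm_ring
      _ = (b * a) * ((b * a) * x) * x := by rw [hx]
      _ = (b * a) * (b * a) * (x * x) := by noncomm_ring
  have key : (1 + (b * a) * x) * (1 - (b * a) * x) = 1 + (b * a) * (b * a) * (-(x * x)) := by
    have e : (1 + (b * a) * x) * (1 - (b * a) * x)
        = 1 - (b * a) * x * ((b * a) * x) := by noncomm_ring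
    rw [e, comm2]; noncomm_ring
  have key' : (1 - (b * a) * x) * (1 + (b * a) * x) = 1 + (b * a) * (b * a) * (-(x * x)) := by
    have e : (1 - (b * a) * x) * (1 + (b * a) * x)
        = 1 - (b * a) * x * ((b * a) * x) := by noncomm_ring
    rw [e, comm2]; noncomm_ring
  obtain ⟨u, hu⟩ := U
  have comm_u : (1 + (b * a) * x) * ↑u = ↑u * (1 + (b * a) * x) := by
    calc (1 + (b * a) * x) * ↑u
        = (1 + (b * a) * x) * ((1 - (b * a) * x) * (1 + (b * a) * x)) := by rw [hu, key']
      _ = ((1 + (b * a) * x) * (1 - (b * a) * x)) * (1 + (b * a) * x) := by noncomm_ring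
      _ = ↑u * (1 + (b * a) * x) := by rw [key, hu]
  have comm_u' : (↑u⁻¹ : R) * (1 + (b * a) * x) = (1 + (b * a) * x) * ↑u⁻¹ := by
    calc (↑u⁻¹ : R) * (1 + (b * a) * x)
        = ↑u⁻¹ * ((1 + (b * a) * x) * (↑u * ↑u⁻¹)) := by rw [Units.mul_inv, mul_one]
      _ = ↑u⁻¹ * (((1 + (b * a) * x) * ↑u) * ↑u⁻¹) := by noncomm_ring
      _ = ↑u⁻¹ * ((↑u * (1 + (b * a) * x)) * ↑u⁻¹) := by rw [comm_u]
      _ = (↑u⁻¹ * ↑u) * ((1 + (b * a) * x) * ↑u⁻¹) := by noncomm_ring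
      _ = (1 + (b * a) * x) * ↑u⁻¹ := by rw [Units.inv_mul, one_mul]
  refine ⟨⟨1 + (b * a) * x, (1 - (b * a) * x) * ↑u⁻¹, ?_, ?_⟩, rfl⟩
  · calc (1 + (b * a) * x) * ((1 - (b * a) * x) * ↑u⁻¹)
        = ((1 + (b * a) * x) * (1 - (b * a) * x)) * ↑u⁻¹ := by noncomm_ring
      _ = ↑u * ↑u⁻¹ := by rw [key, hu]
      _ = 1 := Units.mul_inv u
  · calc ((1 - (b * a) * x) * ↑u⁻¹) * (1 + (b * a) * x)
        = (1 - (b * a) * x) * (↑u⁻¹ * (1 + (b * a) * x)) := by noncomm_ring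
      _ = (1 - (b * a) * x) * ((1 + (b * a) * x) * ↑u⁻¹) := by rw [comm_u']
      _ = ((1 - (b * a) * x) * (1 + (b * a) * x)) * ↑u⁻¹ := by noncomm_ring
      _ = ↑u * ↑u⁻¹ := by rw [key', hu]
      _ = 1 := Units.mul_inv u

theorem stmt12 {R : Type*} [Ring R] (a b d : R) (hd : IsGHInverse (a * b) d) :
    IsGHInverse (b * a) (b * d ^ 2 * a) := by
  obtain ⟨h1, h2, h3⟩ := hd
  have hdt : d * (a * b) = (a * b) * d := h2 (a * b) rfl
  have hd1 : d ^ 2 * (a * b) = d := by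
    rw [pow_two, mul_assoc, hdt, ← mul_assoc, h1]
  have hd2 : (a * b) * d ^ 2 = d := by
    rw [pow_two, ← mul_assoc, ← hdt, h1]
  have h31 : d ^ 3 * (a * b) = d ^ 2 := by
    calc d ^ 3 * (a * b) = d * (d ^ 2 * (a * b)) := by noncomm_ring
      _ = d * d := by rw [hd1]
      _ = d ^ 2 := by rw [pow_two]
  have h32 : (a * b) * d ^ 3 = d ^ 2 := by
    calc (a * b) * d ^ 3 = ((a * b) * d ^ 2) * d := by noncomm_ring
      _ = d * d := by rw [hd2]
      _ = d ^ 2 := by rw [pow_two]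
  refine ⟨?_, ?_, ?_⟩
  · calc b * d ^ 2 * a * (b * a) * (b * d ^ 2 * a)
        = b * ((d ^ 2 * (a * b)) * ((a * b) * d ^ 2)) * a := by noncomm_ring
      _ = b * (d * d) * a := by rw [hd1, hd2]
      _ = b * d ^ 2 * a := by rw [← pow_two]
  · intro y hy
    have hz : (a * y * b) * (a * b) = (a * b) * (a * y * b) := by
      calc (a * y * b) * (a * b) = a * (y * (b * a)) * b := by noncomm_ring
        _ = a * ((b * a) * y) * b := by rw [hy]
        _ = (a * b) * (a * y * b) := by noncomm_ring
    have hdz : d * (a * y * b) = (a * y * b) * d := h2 _ hz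
    have hdz3 : d ^ 3 * (a * y * b) = (a * y * b) * d ^ 3 := by
      calc d ^ 3 * (a * y * b) = d * (d * (d * (a * y * b))) := by noncomm_ring
        _ = d * (d * ((a * y * b) * d)) := by rw [hdz]
        _ = d * ((d * (a * y * b)) * d) := by noncomm_ring
        _ = d * (((a * y * b) * d) * d) := by rw [hdz]
        _ = (d * (a * y * b)) * (d * d) := by noncomm_ring
        _ = ((a * y * b) * d) * (d * d) := by rw [hdz]
        _ = (a * y * b) * d ^ 3 := by noncomm_ring
    have lhs : b * d ^ 2 * a * y = b * (d ^ 3 * (a * y * b)) * a := by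
      calc b * d ^ 2 * a * y = b * (d ^ 3 * (a * b)) * a * y := by rw [h31]
        _ = b * d ^ 3 * (a * ((b * a) * y)) := by noncomm_ring
        _ = b * d ^ 3 * (a * (y * (b * a))) := by rw [hy]
        _ = b * (d ^ 3 * (a * y * b)) * a := by noncomm_ring
    have rhs : y * (b * d ^ 2 * a) = b * ((a * y * b) * d ^ 3) * a := by
      calc y * (b * d ^ 2 * a) = y * (b * ((a * b) * d ^ 3) * a) := by rw [h32]
        _ = (y * (b * a)) * (b * d ^ 3 * a) := by noncomm_ring
        _ = ((b * a) * y) * (b * d ^ 3 * a) := by rw [hy]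
        _ = b * ((a * y * b) * d ^ 3) * a := by noncomm_ring
    rw [lhs, rhs, hdz3]
  · have e : (((a * b) - d) * a) * b = (a * b) ^ 2 - (a * b) * d := by
      calc (((a * b) - d) * a) * b = (a * b) ^ 2 - d * (a * b) := by noncomm_ring
        _ = (a * b) ^ 2 - (a * b) * d := by rw [hdt]
    have hq : IsQuasinilpotent ((((a * b) - d) * a) * b) := by
      rw [e]; exact h3
    have hswap := quasinilpotent_swap hq
    have e2 : (b * a) ^ 2 - (b * a) * (b * d ^ 2 * a) = b * (((a * b) - d) * a) := by
      calc (b * a) ^ 2 - (b * a) * (b * d ^ 2 * a)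
          = b * ((a * b) * a) - b * (((a * b) * d ^ 2) * a) := by noncomm_ring
        _ = b * ((a * b) * a) - b * (d * a) := by rw [hd2]
        _ = b * (((a * b) - d) * a) := by noncomm_ring
    rw [show ((b * a) ^ 2 - (b * a) * (b * d ^ 2 * a)) = b * (((a * b) - d) * a) from e2]
    exact hswap
end

section
/- Let R be a ring, a, b ∈ R, and k ≥ 1. If (ab)^k has a generalized Hirano inverse, then so does (ba)^k. -/
/-- Jacobson's lemma. -/
private lemma jac {R : Type*} [Ring R] (x y : R) (h : IsUnit (1 + x * y)) :
    IsUnit (1 + y * x) := by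
  obtain ⟨v, hv1, hv2⟩ := isUnit_iff_exists.mp h
  refine isUnit_iff_exists.mpr ⟨1 - y * v * x, ?_, ?_⟩
  · calc (1 + y * x) * (1 - y * v * x)
        = 1 + y * x - y * ((1 + x * y) * v) * x := by noncomm_ring
      _ = 1 := by rw [hv1]; noncomm_ring
  · calc (1 - y * v * x) * (1 + y * x)
        = 1 + y * x - y * (v * (1 + x * y)) * x := by noncomm_ring
      _ = 1 := by rw [hv2]; noncomm_ring

private lemma unit_of_sq {R : Type*} [Ring R] (s : R) (h : IsUnit (1 - s * s)) :
    IsUnit (1 + s) := by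
  obtain ⟨v, hv1, hv2⟩ := isUnit_iff_exists.mp h
  have hcomm : s * (1 - s * s) = (1 - s * s) * s := by noncomm_ring
  have hsv : s * v = v * s := by
    calc s * v = (v * (1 - s * s)) * (s * v) := by rw [hv2, one_mul]
      _ = v * ((1 - s * s) * s) * v := by noncomm_ring
      _ = v * (s * (1 - s * s)) * v := by rw [hcomm]
      _ = (v * s) * ((1 - s * s) * v) := by noncomm_ring
      _ = v * s := by rw [hv1, mul_one]
  refine isUnit_iff_exists.mpr ⟨(1 - s) * v, ?_, ?_⟩
  · calc (1 + s) * ((1 - s) * v) = (1 - s * s) * v := by noncomm_ring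
      _ = 1 := hv1
  · calc ((1 - s) * v) * (1 + s) = (1 - s) * (v + s * v) := by rw [hsv]; noncomm_ring
      _ = (1 - s * s) * v := by noncomm_ring
      _ = 1 := hv1

/-- Cline's formula for generalized Hirano inverses. -/
private lemma cline {R : Type*} [Ring R] (U V d : R) (h : IsGHInverse (U * V) d) :
    IsGHInverse (V * U) (V * (d * d) * U) := by
  obtain ⟨h1, h2, h3⟩ := h
  have hdα : d * (U * V) = (U * V) * d := h2 (U * V) rfl
  have hd2 : (U * V) * (d * d) = d := by
    calc (U * V) * (d * d) = ((U * V) * d) * d := by noncomm_ring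
      _ = (d * (U * V)) * d := by rw [hdα]
      _ = d := h1
  have hd2' : (d * d) * (U * V) = d := by
    calc (d * d) * (U * V) = d * (d * (U * V)) := by noncomm_ring
      _ = d * ((U * V) * d) := by rw [hdα]
      _ = d := by rw [← mul_assoc]; exact h1
  have hd3R : (U * V) * (d * (d * d)) = d * d := by
    calc (U * V) * (d * (d * d)) = ((U * V) * (d * d)) * d := by noncomm_ring
      _ = d * d := by rw [hd2]
  refine ⟨?_, ?_, ?_⟩
  · -- e β e = e
    calc (V * (d * d) * U) * (V * U) * (V * (d * d) * U)
        = V * (((d * d) * (U * V)) * ((U * V) * (d * d))) * U := by noncomm_ring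
      _ = V * (d * d) * U := by rw [hd2', hd2]
  · -- double commutant
    intro y hy
    have hyh : (U * y * V) * (U * V) = (U * V) * (U * y * V) := by
      calc (U * y * V) * (U * V) = U * (y * (V * U)) * V := by noncomm_ring
        _ = U * ((V * U) * y) * V := by rw [hy]
        _ = (U * V) * (U * y * V) := by noncomm_ring
    have hdy : d * (U * y * V) = (U * y * V) * d := h2 _ hyh
    have hdy3 : (d * (d * d)) * (U * y * V) = (U * y * V) * (d * (d * d)) := by
      calc (d * (d * d)) * (U * y * V) = d * (d * (d * (U * y * V))) := by noncomm_ring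
        _ = d * (d * ((U * y * V) * d)) := by rw [hdy]
        _ = d * ((d * (U * y * V)) * d) := by noncomm_ring
        _ = d * (((U * y * V) * d) * d) := by rw [hdy]
        _ = (d * (U * y * V)) * (d * d) := by noncomm_ring
        _ = ((U * y * V) * d) * (d * d) := by rw [hdy]
        _ = (U * y * V) * (d * (d * d)) := by noncomm_ring
    calc (V * (d * d) * U) * y
        = V * (d * ((d * d) * (U * V))) * U * y := by rw [hd2']
      _ = (V * (d * (d * d))) * (U * ((V * U) * y)) := by noncomm_ring
      _ = (V * (d * (d * d))) * (U * (y * (V * U))) := by rw [hy]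
      _ = V * ((d * (d * d)) * (U * y * V)) * U := by noncomm_ring
      _ = V * ((U * y * V) * (d * (d * d))) * U := by rw [hdy3]
      _ = ((V * U) * y) * (V * (d * (d * d)) * U) := by noncomm_ring
      _ = (y * (V * U)) * (V * (d * (d * d)) * U) := by rw [hy]
      _ = y * (V * ((U * V) * (d * (d * d))) * U) := by noncomm_ring
      _ = y * (V * (d * d) * U) := by rw [hd3R]
  · -- quasinilpotency of β² - βe
    have hβ : (V * U) ^ 2 - (V * U) * (V * (d * d) * U) = V * ((U * V) - d) * U := by
      calc (V * U) ^ 2 - (V * U) * (V * (d * d) * U)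
          = V * (U * V) * U - V * ((U * V) * (d * d)) * U := by noncomm_ring
        _ = V * ((U * V) - d) * U := by rw [hd2]; noncomm_ring
    have hζ1 : (U * V) ^ 2 - (U * V) * d = (U * V) * ((U * V) - d) := by noncomm_ring
    have hζ2 : ((U * V) - d) * (U * V) = (U * V) ^ 2 - (U * V) * d := by
      calc ((U * V) - d) * (U * V) = (U * V) ^ 2 - d * (U * V) := by noncomm_ring
        _ = (U * V) ^ 2 - (U * V) * d := by rw [hdα]
    have hgα : ((U * V) - d) * (U * V) = (U * V) * ((U * V) - d) := by rw [hζ2, hζ1]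
    rw [hζ1] at h3
    intro z hz
    rw [hβ] at hz
    -- hz : z * (V * ((U*V) - d) * U) = (V * ((U*V) - d) * U) * z
    have hz2 : (z * z) * (V * ((U * V) - d) * U) = (V * ((U * V) - d) * U) * (z * z) := by
      calc (z * z) * (V * ((U * V) - d) * U)
          = z * (z * (V * ((U * V) - d) * U)) := by noncomm_ring
        _ = z * ((V * ((U * V) - d) * U) * z) := by rw [hz]
        _ = (z * (V * ((U * V) - d) * U)) * z := by noncomm_ring
        _ = ((V * ((U * V) - d) * U) * z) * z := by rw [hz]
        _ = (V * ((U * V) - d) * U) * (z * z) := by noncomm_ring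
    have hc2 : (U * (z * z) * V) * (((U * V) - d) * (U * V))
        = ((U * V) * ((U * V) - d)) * (U * (z * z) * V) := by
      calc (U * (z * z) * V) * (((U * V) - d) * (U * V))
          = U * ((z * z) * (V * ((U * V) - d) * U)) * V := by noncomm_ring
        _ = U * ((V * ((U * V) - d) * U) * (z * z)) * V := by rw [hz2]
        _ = ((U * V) * ((U * V) - d)) * (U * (z * z) * V) := by noncomm_ring
    have hm : (((U * V) - d) * (U * (z * z) * V)) * ((U * V) * ((U * V) - d))
        = ((U * V) * ((U * V) - d)) * (((U * V) - d) * (U * (z * z) * V)) := by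
      calc (((U * V) - d) * (U * (z * z) * V)) * ((U * V) * ((U * V) - d))
          = ((U * V) - d) * ((U * (z * z) * V) * ((U * V) * ((U * V) - d))) := by noncomm_ring
        _ = ((U * V) - d) * ((U * (z * z) * V) * (((U * V) - d) * (U * V))) := by rw [hgα]
        _ = ((U * V) - d) * (((U * V) * ((U * V) - d)) * (U * (z * z) * V)) := by rw [hc2]
        _ = (((U * V) - d) * (U * V)) * (((U * V) - d) * (U * (z * z) * V)) := by noncomm_ring
        _ = ((U * V) * ((U * V) - d)) * (((U * V) - d) * (U * (z * z) * V)) := by rw [hgα]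
    have hsq : (((U * V) - d) * (U * z * V)) * (((U * V) - d) * (U * z * V))
        = ((U * V) * ((U * V) - d)) * (((U * V) - d) * (U * (z * z) * V)) := by
      calc (((U * V) - d) * (U * z * V)) * (((U * V) - d) * (U * z * V))
          = ((U * V) - d) * U * (z * (V * ((U * V) - d) * U)) * (z * V) := by noncomm_ring
        _ = ((U * V) - d) * U * ((V * ((U * V) - d) * U) * z) * (z * V) := by rw [hz]
        _ = (((U * V) - d) * (U * V)) * (((U * V) - d) * (U * (z * z) * V)) := by noncomm_ring
        _ = ((U * V) * ((U * V) - d)) * (((U * V) - d) * (U * (z * z) * V)) := by rw [hgα]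
    have hU1 : IsUnit (1 + ((U * V) * ((U * V) - d)) * (-(((U * V) - d) * (U * (z * z) * V)))) := by
      refine h3 _ ?_
      rw [neg_mul, mul_neg, hm]
    have heq : 1 + ((U * V) * ((U * V) - d)) * (-(((U * V) - d) * (U * (z * z) * V)))
        = 1 - (((U * V) - d) * (U * z * V)) * (((U * V) - d) * (U * z * V)) := by
      rw [mul_neg, ← sub_eq_add_neg, hsq]
    have hU2 : IsUnit (1 - (((U * V) - d) * (U * z * V)) * (((U * V) - d) * (U * z * V))) :=
      heq ▸ hU1
    have hU3 : IsUnit (1 + ((U * V) - d) * (U * z * V)) := unit_of_sq _ hU2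
    have hU3' : IsUnit (1 + (((U * V) - d) * U * z) * V) := by
      have : 1 + ((U * V) - d) * (U * z * V) = 1 + (((U * V) - d) * U * z) * V := by
        noncomm_ring
      exact this ▸ hU3
    have hU4 : IsUnit (1 + V * (((U * V) - d) * U * z)) := jac _ _ hU3'
    have hfin : 1 + ((V * U) ^ 2 - (V * U) * (V * (d * d) * U)) * z
        = 1 + V * (((U * V) - d) * U * z) := by
      rw [hβ]; noncomm_ring
    rw [hfin]
    exact hU4

theorem stmt13 {R : Type*} [Ring R] (a b : R) (k : ℕ) (hk : 1 ≤ k)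
    (h : ∃ d, IsGHInverse ((a * b) ^ k) d) : ∃ d, IsGHInverse ((b * a) ^ k) d := by
  obtain ⟨m, rfl⟩ : ∃ m, k = m + 1 := ⟨k - 1, (Nat.succ_pred_eq_of_pos hk).symm⟩
  obtain ⟨d, hd⟩ := h
  have hab : (a * b) ^ (m + 1) = a * (b * (a * b) ^ m) := by
    rw [pow_succ', mul_assoc]
  have hsc : b * (a * b) ^ m = (b * a) ^ m * b :=
    (SemiconjBy.pow_right (show SemiconjBy b (a * b) (b * a) from (mul_assoc b a b).symm) m)
  have hba : (b * a) ^ (m + 1) = (b * (a * b) ^ m) * a := by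
    rw [pow_succ, hsc, mul_assoc]
  rw [hab] at hd
  rw [hba]
  exact ⟨_, cline a (b * (a * b) ^ m) d hd⟩
end

section
/- Let A be a complex Banach algebra and a, b ∈ A with ab = ba. If a and b both have generalized Hirano inverses, then ab has a generalized Hirano inverse and (ab)^h = a^h b^h. -/
/-! In a complex Banach algebra the double-commutant condition on a generalized Hirano inverse
comes for free. If `d` and `t` both commute with `e` and satisfy `ded = d`, `tet = t`, with
`e² - ed` and `e² - et` quasinilpotent, then `ed (1 - et) = d^(2n) (e² (1 - et))^n` and
`(1 - ed) et = (e² (1 - ed))^n t^(2n)` for all `n ≥ 1`, and Gelfand's formula forces both to vanish;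
hence `ed = et` and `d = t`. So `d` is fixed by conjugation with every unit commuting with `e`, and
every `y` commuting with `e` is a scalar minus such a unit.

For commuting `a, b` the elements `a, b, aʰ, bʰ` pairwise commute, so they lie in a commutative
closed subalgebra, where spectra are described by characters and
`(ab)² - ab aʰbʰ = b² (a² - a aʰ) + a aʰ (b² - b bʰ)` is quasinilpotent. -/

open Filter Topology
open scoped IsMulCommutative

theorem spectralRadius_eq_zero_iff {𝕜 R : Type*} [NormedField 𝕜] [Ring R] [Algebra 𝕜 R] {a : R} :
    spectralRadius 𝕜 a = 0 ↔ spectrum 𝕜 a ⊆ {0} := by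
  simp [spectralRadius, Set.subset_def]

structure IsCommGHInverse {A : Type*} [NormedRing A] [NormedAlgebra ℂ A] (e d : A) : Prop where
  commute : Commute d e
  mul_mul_eq : d * e * d = d
  spectralRadius_sq_sub_eq_zero : spectralRadius ℂ (e ^ 2 - e * d) = 0

section Commutative

variable {B : Type*} [NormedRing B] [IsMulCommutative B] [NormedAlgebra ℂ B] [CompleteSpace B]

theorem spectralRadius_eq_zero_iff_forall_characterSpace {x : B} :
    spectralRadius ℂ x = 0 ↔ ∀ φ : WeakDual.characterSpace ℂ B, φ x = 0 := by
  let _ : NormedCommRing B := { ‹NormedRing B› with mul_comm := mul_comm }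
  rw [spectralRadius_eq_zero_iff]
  refine ⟨fun h φ => h (WeakDual.CharacterSpace.apply_mem_spectrum φ x), fun h z hz => ?_⟩
  obtain ⟨φ, rfl⟩ := WeakDual.CharacterSpace.mem_spectrum_iff_exists.1 hz
  exact h φ

theorem spectralRadius_mul_eq_zero_of_left {x : B} (hx : spectralRadius ℂ x = 0) (y : B) :
    spectralRadius ℂ (x * y) = 0 := by
  rw [spectralRadius_eq_zero_iff_forall_characterSpace] at hx ⊢
  intro φ
  rw [map_mul, hx, zero_mul]

theorem IsCommGHInverse.mul {a b a' b' : B} (ha : IsCommGHInverse a a')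
    (hb : IsCommGHInverse b b') : IsCommGHInverse (a * b) (a' * b') := by
  let _ : CommRing B := { ‹NormedRing B› with mul_comm := mul_comm }
  refine ⟨mul_comm _ _, ?_, ?_⟩
  · linear_combination (b' * b * b') * ha.mul_mul_eq + a' * hb.mul_mul_eq
  · have ha₀ := ha.spectralRadius_sq_sub_eq_zero
    have hb₀ := hb.spectralRadius_sq_sub_eq_zero
    rw [spectralRadius_eq_zero_iff_forall_characterSpace] at ha₀ hb₀ ⊢
    intro φ
    have hφa := ha₀ φ
    have hφb := hb₀ φ
    simp only [map_sub, map_mul, map_pow] at hφa hφb ⊢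
    linear_combination φ b ^ 2 * hφa + φ a * φ a' * hφb

end Commutative

section TopologicalClosure

variable {R A : Type*} [CommRing R] [TopologicalSpace A] [Ring A] [Algebra R A]
  [IsSemitopologicalRing A]

theorem Algebra.subset_topologicalClosure_adjoin (s : Set A) :
    s ⊆ (adjoin R s).topologicalClosure :=
  subset_adjoin.trans (adjoin R s).le_topologicalClosure

theorem Algebra.isMulCommutative_topologicalClosure_adjoin [T2Space A] {s : Set A}
    (hs : ∀ x ∈ s, ∀ y ∈ s, Commute x y) : IsMulCommutative (adjoin R s).topologicalClosure :=
  have := isMulCommutative_adjoin R hs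
  ⟨⟨((adjoin R s).commRingTopologicalClosure mul_comm).mul_comm⟩⟩

end TopologicalClosure

section NormedAlgebra

variable {A : Type*} [NormedRing A] [NormedAlgebra ℂ A] {e d : A}

theorem IsCommGHInverse.isIdempotentElem (h : IsCommGHInverse e d) : IsIdempotentElem (e * d) := by
  rw [IsIdempotentElem, mul_assoc, ← mul_assoc d, h.mul_mul_eq]

theorem IsCommGHInverse.map {B : Type*} [NormedRing B] [NormedAlgebra ℂ B]
    (h : IsCommGHInverse e d) (f : A ≃ₐ[ℂ] B) : IsCommGHInverse (f e) (f d) where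
  commute := h.commute.map f
  mul_mul_eq := by rw [← map_mul, ← map_mul, h.mul_mul_eq]
  spectralRadius_sq_sub_eq_zero := by
    rw [← map_pow, ← map_mul, ← map_sub, spectralRadius, AlgEquiv.spectrum_eq]
    exact h.spectralRadius_sq_sub_eq_zero

end NormedAlgebra

section Banach

variable {A : Type*} [NormedRing A] [NormedAlgebra ℂ A] [CompleteSpace A]

instance (S : Subalgebra ℂ A) : CompleteSpace S.topologicalClosure :=
  S.isClosed_topologicalClosure.completeSpace_coe

/-- The spectra in `S` and in `A` may differ, but Gelfand's formula only sees norms. -/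
theorem Subalgebra.spectralRadius_coe (S : Subalgebra ℂ A) [CompleteSpace S] (x : S) :
    spectralRadius ℂ (x : A) = spectralRadius ℂ x :=
  tendsto_nhds_unique (spectrum.pow_nnnorm_pow_one_div_tendsto_nhds_spectralRadius (x : A))
    (spectrum.pow_nnnorm_pow_one_div_tendsto_nhds_spectralRadius x)

theorem Subalgebra.isCommGHInverse_coe_iff (S : Subalgebra ℂ A) [CompleteSpace S] {e d : S} :
    IsCommGHInverse (e : A) d ↔ IsCommGHInverse e d := by
  have hcomm : Commute (d : A) e ↔ Commute d e := by
    simp only [Commute, SemiconjBy, ← Subalgebra.coe_mul, SetLike.coe_eq_coe]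
  have hmul : (d : A) * e * d = d ↔ d * e * d = d := by
    simp only [← Subalgebra.coe_mul, SetLike.coe_eq_coe]
  have hρ : spectralRadius ℂ ((e : A) ^ 2 - e * d) = spectralRadius ℂ (e ^ 2 - e * d) := by
    rw [← S.spectralRadius_coe]; push_cast; rfl
  exact ⟨fun ⟨h₁, h₂, h₃⟩ => ⟨hcomm.1 h₁, hmul.1 h₂, hρ ▸ h₃⟩,
    fun ⟨h₁, h₂, h₃⟩ => ⟨hcomm.2 h₁, hmul.2 h₂, hρ ▸ h₃⟩⟩

theorem Commute.spectralRadius_mul_eq_zero {z x : A} (h : Commute z x)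
    (hz : spectralRadius ℂ z = 0) : spectralRadius ℂ (z * x) = 0 := by
  have := Algebra.isMulCommutative_topologicalClosure_adjoin (R := ℂ) (s := {z, x})
    (by simp [h, h.symm])
  set S := (Algebra.adjoin ℂ {z, x}).topologicalClosure
  let z' : S := ⟨z, Algebra.subset_topologicalClosure_adjoin _ (by simp)⟩
  let x' : S := ⟨x, Algebra.subset_topologicalClosure_adjoin _ (by simp)⟩
  rw [show z * x = ((z' * x' : S) : A) from rfl, S.spectralRadius_coe]
  exact spectralRadius_mul_eq_zero_of_left ((S.spectralRadius_coe z').symm.trans hz) x'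

theorem IsCommGHInverse.mul_of_commute {a b a' b' : A} (ha : IsCommGHInverse a a')
    (hb : IsCommGHInverse b b') (hab : Commute a b) (ha'b : Commute a' b) (hab' : Commute a b')
    (ha'b' : Commute a' b') : IsCommGHInverse (a * b) (a' * b') := by
  have := Algebra.isMulCommutative_topologicalClosure_adjoin (R := ℂ) (s := {a, b, a', b'}) (by
    simp [hab, hab.symm, ha'b, ha'b.symm, hab', hab'.symm, ha'b', ha'b'.symm, ha.commute,
      ha.commute.symm, hb.commute, hb.commute.symm])
  set S := (Algebra.adjoin ℂ {a, b, a', b'}).topologicalClosure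
  let α : S := ⟨a, Algebra.subset_topologicalClosure_adjoin _ (by simp)⟩
  let β : S := ⟨b, Algebra.subset_topologicalClosure_adjoin _ (by simp)⟩
  let α' : S := ⟨a', Algebra.subset_topologicalClosure_adjoin _ (by simp)⟩
  let β' : S := ⟨b', Algebra.subset_topologicalClosure_adjoin _ (by simp)⟩
  exact S.isCommGHInverse_coe_iff (e := α * β) (d := α' * β') |>.2 <|
    (S.isCommGHInverse_coe_iff.1 ha).mul (S.isCommGHInverse_coe_iff.1 hb)

theorem isQuasinilpotent_iff_spectralRadius_eq_zero {z : A} :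
    IsQuasinilpotent z ↔ spectralRadius ℂ z = 0 := by
  refine ⟨fun h => spectralRadius_eq_zero_iff.2 fun μ hμ => ?_, fun h x hx => ?_⟩
  · by_contra! hμ₀
    have hunit := h ((-μ⁻¹) • 1) (by rw [smul_mul_assoc, mul_smul_comm, one_mul, mul_one])
    refine spectrum.mem_iff.1 hμ ?_
    have : algebraMap ℂ A μ - z = μ • (1 + z * ((-μ⁻¹) • 1)) := by
      rw [mul_smul_comm, mul_one, smul_add, smul_smul, mul_neg, mul_inv_cancel₀ hμ₀, neg_one_smul,
        ← sub_eq_add_neg, Algebra.algebraMap_eq_smul_one]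
    rw [this]
    exact hunit.smul (Units.mk0 μ hμ₀)
  · have h₁ : (-1 : ℂ) ∉ spectrum ℂ (z * x) := fun hm => by
      simpa using spectralRadius_eq_zero_iff.1 (Commute.spectralRadius_mul_eq_zero hx.symm h) hm
    rwa [spectrum.notMem_iff, map_neg, map_one, ← neg_add', IsUnit.neg_iff] at h₁

theorem tendsto_pow_mul_norm_pow_of_spectralRadius_eq_zero {v : A}
    (hv : spectralRadius ℂ v = 0) {C : ℝ} (hC : 0 ≤ C) :
    Tendsto (fun n : ℕ => C ^ n * ‖v ^ n‖) atTop (𝓝 0) := by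
  have hroot : ∀ᶠ n : ℕ in atTop, ‖v ^ n‖ ^ (1 / n : ℝ) < (2 * (C + 1))⁻¹ := by
    have := (spectrum.pow_norm_pow_one_div_tendsto_nhds_spectralRadius v).eventually_lt_const
      (u := ENNReal.ofReal (2 * (C + 1))⁻¹) (by rw [hv, ENNReal.ofReal_pos]; positivity)
    filter_upwards [this] with n hn
    exact (ENNReal.ofReal_lt_ofReal_iff (by positivity)).1 hn
  refine squeeze_zero' (Eventually.of_forall fun n => by positivity) ?_
    (tendsto_pow_atTop_nhds_zero_of_lt_one (r := 1 / 2) (by norm_num) (by norm_num))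
  filter_upwards [hroot, eventually_ne_atTop 0] with n hn hn₀
  calc C ^ n * ‖v ^ n‖ = (C * ‖v ^ n‖ ^ (1 / n : ℝ)) ^ n := by
        rw [mul_pow, ← Real.rpow_natCast (_ ^ _), ← Real.rpow_mul (norm_nonneg _),
          one_div_mul_cancel (by exact_mod_cast hn₀), Real.rpow_one]
    _ ≤ (1 / 2) ^ n := by
        refine pow_le_pow_left₀ (by positivity) ?_ n
        calc C * ‖v ^ n‖ ^ (1 / n : ℝ) ≤ C * (2 * (C + 1))⁻¹ := by gcongr
          _ ≤ 1 / 2 := by rw [mul_inv_le_iff₀ (by positivity)]; linarith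

theorem eq_zero_of_norm_le_pow_mul_norm_pow {v x : A} (hv : spectralRadius ℂ v = 0) {C : ℝ}
    (hC : 0 ≤ C) (h : ∀ᶠ n : ℕ in atTop, ‖x‖ ≤ C ^ n * ‖v ^ n‖) : x = 0 :=
  norm_le_zero_iff.1 <| ge_of_tendsto (tendsto_pow_mul_norm_pow_of_spectralRadius_eq_zero hv hC) h

namespace IsCommGHInverse

variable {e d t : A}

theorem spectralRadius_sq_mul_one_sub_eq_zero (h : IsCommGHInverse e d) :
    spectralRadius ℂ (e ^ 2 * (1 - e * d)) = 0 := by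
  have hcomm : Commute (e ^ 2 - e * d) (1 - e * d) :=
    (Commute.one_right _).sub_right
      ((((Commute.refl e).mul_right h.commute.symm).pow_left 2).sub_left (Commute.refl _))
  have hfactor : e ^ 2 * (1 - e * d) = (e ^ 2 - e * d) * (1 - e * d) := by
    rw [sub_mul, h.isIdempotentElem.mul_one_sub_self, sub_zero]
  rw [hfactor]
  exact hcomm.spectralRadius_mul_eq_zero h.spectralRadius_sq_sub_eq_zero

theorem mul_one_sub_eq_zero (hd : IsCommGHInverse e d) (ht : IsCommGHInverse e t) :
    e * d * (1 - e * t) = 0 := by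
  have hcomm : Commute (e ^ 2) (1 - e * t) :=
    ((Commute.one_right e).sub_right ((Commute.refl e).mul_right ht.commute.symm)).pow_left 2
  refine eq_zero_of_norm_le_pow_mul_norm_pow ht.spectralRadius_sq_mul_one_sub_eq_zero
    (sq_nonneg ‖d‖) ?_
  filter_upwards [eventually_ne_atTop 0] with n hn
  have : e * d * (1 - e * t) = d ^ (2 * n) * (e ^ 2 * (1 - e * t)) ^ n := by
    rw [hcomm.mul_pow, ht.isIdempotentElem.one_sub.pow_eq hn, ← pow_mul, ← mul_assoc,
      ← hd.commute.mul_pow, hd.commute.eq, hd.isIdempotentElem.pow_eq (by omega)]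
  calc ‖e * d * (1 - e * t)‖ ≤ ‖d ^ (2 * n)‖ * ‖(e ^ 2 * (1 - e * t)) ^ n‖ := by
        rw [this]; exact norm_mul_le _ _
    _ ≤ (‖d‖ ^ 2) ^ n * ‖(e ^ 2 * (1 - e * t)) ^ n‖ := by
        rw [← pow_mul]; gcongr; exact norm_pow_le' d (by omega)

theorem one_sub_mul_eq_zero (hd : IsCommGHInverse e d) (ht : IsCommGHInverse e t) :
    (1 - e * d) * (e * t) = 0 := by
  have hcomm : Commute (e ^ 2) (1 - e * d) :=
    ((Commute.one_right e).sub_right ((Commute.refl e).mul_right hd.commute.symm)).pow_left 2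
  refine eq_zero_of_norm_le_pow_mul_norm_pow hd.spectralRadius_sq_mul_one_sub_eq_zero
    (sq_nonneg ‖t‖) ?_
  filter_upwards [eventually_ne_atTop 0] with n hn
  have : (1 - e * d) * (e * t) = (e ^ 2 * (1 - e * d)) ^ n * t ^ (2 * n) := by
    rw [hcomm.mul_pow, hd.isIdempotentElem.one_sub.pow_eq hn, (hcomm.pow_left n).eq, ← pow_mul,
      mul_assoc, ← ht.commute.symm.mul_pow, ht.isIdempotentElem.pow_eq (by omega)]
  calc ‖(1 - e * d) * (e * t)‖ ≤ ‖(e ^ 2 * (1 - e * d)) ^ n‖ * ‖t ^ (2 * n)‖ := by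
        rw [this]; exact norm_mul_le _ _
    _ ≤ (‖t‖ ^ 2) ^ n * ‖(e ^ 2 * (1 - e * d)) ^ n‖ := by
        rw [mul_comm, ← pow_mul]; gcongr; exact norm_pow_le' t (by omega)

theorem unique (hd : IsCommGHInverse e d) (ht : IsCommGHInverse e t) : d = t := by
  have hpq : e * d = e * d * (e * t) := by
    rw [← sub_eq_zero, ← mul_one_sub, hd.mul_one_sub_eq_zero ht]
  have hqp : e * t = e * d * (e * t) := by
    rw [← sub_eq_zero, ← one_sub_mul, hd.one_sub_mul_eq_zero ht]
  calc d = d * e * d := hd.mul_mul_eq.symm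
    _ = d * (e * t) := by rw [mul_assoc, hpq.trans hqp.symm]
    _ = e * t * t := by rw [← mul_assoc, hd.commute.eq, hpq.trans hqp.symm]
    _ = t := by rw [← ht.commute.eq, ht.mul_mul_eq]

theorem inDoubleCommutant (h : IsCommGHInverse e d) : InDoubleCommutant e d := by
  intro y hy
  obtain ⟨μ, hμ⟩ : ∃ μ : ℂ, μ ∉ spectrum ℂ y := by
    simpa [Set.ne_univ_iff_exists_notMem] using (spectrum.isCompact y).ne_univ
  have hunit := spectrum.notMem_iff.1 hμ
  set u : Aˣ := hunit.unit
  have hue : Commute (u : A) e := by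
    rw [hunit.unit_spec]
    exact (Algebra.commute_algebraMap_left μ e).sub_left hy
  let f : A ≃ₐ[ℂ] A := MulSemiringAction.toAlgEquiv ℂ A (ConjAct.toConjAct u)
  have hf : ∀ x, f x = u * x * ↑u⁻¹ := fun x => rfl
  have hfe : f e = e := by rw [hf, hue.eq, Units.mul_inv_cancel_right]
  have hfd : f d = d := (hfe ▸ h.map f).unique h
  have hud : Commute (u : A) d := by
    rw [hf] at hfd
    exact (Units.mul_inv_eq_iff_eq_mul u).1 hfd
  have hyd := (Algebra.commute_algebraMap_left μ d).sub_left hud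
  rw [hunit.unit_spec, sub_sub_cancel] at hyd
  exact hyd.symm.eq

end IsCommGHInverse

theorem isGHInverse_iff_isCommGHInverse {e d : A} : IsGHInverse e d ↔ IsCommGHInverse e d :=
  ⟨fun ⟨h₁, h₂, h₃⟩ => ⟨h₂ e rfl, h₁, isQuasinilpotent_iff_spectralRadius_eq_zero.1 h₃⟩,
    fun h => ⟨h.mul_mul_eq, h.inDoubleCommutant,
      isQuasinilpotent_iff_spectralRadius_eq_zero.2 h.spectralRadius_sq_sub_eq_zero⟩⟩

end Banach

theorem stmt14 {A : Type*} [NormedRing A] [NormedAlgebra ℂ A] [CompleteSpace A]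
    (a b a' b' : A) (hcomm : a * b = b * a)
    (ha : IsGHInverse a a') (hb : IsGHInverse b b') :
    IsGHInverse (a * b) (a' * b') := by
  have ha'b : Commute a' b := ha.2.1 b hcomm.symm
  have hab' : Commute a b' := (hb.2.1 a hcomm).symm
  have ha'b' : Commute a' b' := ha.2.1 b' hab'.eq.symm
  rw [isGHInverse_iff_isCommGHInverse] at ha hb ⊢
  exact ha.mul_of_commute hb hcomm ha'b hab' ha'b'
end

section
/- Let A be a complex Banach algebra and a, b ∈ A with generalized Hirano inverses such that ab = ba = 0. Then a + b has a generalized Hirano inverse and (a+b)^h = a^h + b^h. -/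
open Filter

/-- In a complex Banach algebra this is equivalent to `IsQuasinilpotent` (spectral radius zero). -/
def HasSubgeometricPowers {A : Type*} [NormedRing A] (x : A) : Prop :=
  ∀ ε : ℝ, 0 < ε → ∀ᶠ n : ℕ in atTop, ‖x ^ n‖ ≤ ε ^ n

namespace HasSubgeometricPowers

variable {A : Type*} [NormedRing A] {x y z : A}

lemma mul_of_commute (hx : HasSubgeometricPowers x) (c : A) (hc : Commute x c) :
    HasSubgeometricPowers (x * c) := by
  intro ε hε
  filter_upwards [hx (ε / (‖c‖ + 1)) (by positivity), eventually_gt_atTop 0] with n hn hn0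
  calc ‖(x * c) ^ n‖ = ‖x ^ n * c ^ n‖ := by rw [hc.mul_pow]
    _ ≤ ‖x ^ n‖ * ‖c ^ n‖ := norm_mul_le _ _
    _ ≤ (ε / (‖c‖ + 1)) ^ n * (‖c‖ + 1) ^ n := by
        gcongr
        exact (norm_pow_le' c hn0).trans (pow_le_pow_left₀ (norm_nonneg c) (by linarith) n)
    _ = ε ^ n := by rw [div_pow, div_mul_cancel₀]; positivity

lemma add_of_mul_eq_zero (hx : HasSubgeometricPowers x) (hy : HasSubgeometricPowers y)
    (hxy : x * y = 0) (hyx : y * x = 0) : HasSubgeometricPowers (x + y) := by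
  have hpow : ∀ n : ℕ, (x + y) ^ (n + 1) = x ^ (n + 1) + y ^ (n + 1) := by
    intro n
    induction n with
    | zero => simp
    | succ k ih =>
      have hxy' : x ^ (k + 1) * y = 0 := by rw [pow_succ, mul_assoc, hxy, mul_zero]
      have hyx' : y ^ (k + 1) * x = 0 := by rw [pow_succ, mul_assoc, hyx, mul_zero]
      rw [pow_succ, ih, add_mul, mul_add, mul_add, hxy', hyx', ← pow_succ, ← pow_succ,
        add_zero, zero_add]
  intro ε hε
  filter_upwards [hx (ε / 2) (by positivity), hy (ε / 2) (by positivity),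
    eventually_gt_atTop 0] with n hxn hyn hn0
  obtain ⟨m, rfl⟩ := Nat.exists_eq_add_one_of_ne_zero hn0.ne'
  have hhalf : (ε / 2) ^ (m + 1) ≤ ε ^ (m + 1) / 2 := by
    rw [div_pow, pow_succ 2]
    gcongr
    exact le_mul_of_one_le_left zero_le_two (one_le_pow₀ one_le_two)
  calc ‖(x + y) ^ (m + 1)‖ ≤ ‖x ^ (m + 1)‖ + ‖y ^ (m + 1)‖ := hpow m ▸ norm_add_le _ _
    _ ≤ ε ^ (m + 1) := by linarith

lemma eq_zero_of_forall_norm_le (hx : HasSubgeometricPowers x) (w : A)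
    (h : ∀ n, 0 < n → ‖z‖ ≤ ‖x ^ n‖ * ‖w‖ ^ n * ‖z‖) : z = 0 := by
  set ε := (2 * ‖w‖ + 1)⁻¹
  have hεw : ε * ‖w‖ ≤ 1 / 2 := by
    rw [← div_eq_inv_mul, div_le_div_iff₀ (by positivity) two_pos]
    linarith [norm_nonneg w]
  obtain ⟨n, hn, hn0⟩ := ((hx ε (by positivity)).and (eventually_gt_atTop 0)).exists
  have hsmall : ‖x ^ n‖ * ‖w‖ ^ n ≤ 1 / 2 :=
    calc ‖x ^ n‖ * ‖w‖ ^ n ≤ ε ^ n * ‖w‖ ^ n := by gcongr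
      _ = (ε * ‖w‖) ^ n := (mul_pow _ _ _).symm
      _ ≤ (1 / 2) ^ n := by gcongr
      _ ≤ 1 / 2 := pow_le_of_le_one (by norm_num) (by norm_num) hn0.ne'
  have hz := h n hn0
  exact norm_le_zero_iff.mp (by nlinarith [norm_nonneg z])

lemma eq_zero_of_mul_eq_mul_unit (hx : HasSubgeometricPowers x) (u : Aˣ)
    (h : x * z = z * u) : z = 0 := by
  refine hx.eq_zero_of_forall_norm_le (↑u⁻¹ : A) fun n hn => ?_
  have hpow : z * ↑(u ^ n) = x ^ n * z := by
    rw [Units.val_pow_eq_pow_val]; exact (SemiconjBy.pow_right h.symm n)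
  calc ‖z‖ = ‖x ^ n * z * ↑(u⁻¹ ^ n)‖ := by
        rw [← hpow, inv_pow, mul_assoc, Units.mul_inv, mul_one]
    _ ≤ ‖x ^ n‖ * ‖z‖ * ‖(↑u⁻¹ : A)‖ ^ n := by
        rw [Units.val_pow_eq_pow_val]
        exact (norm_mul₃_le).trans (by gcongr; exact norm_pow_le' _ hn)
    _ = ‖x ^ n‖ * ‖(↑u⁻¹ : A)‖ ^ n * ‖z‖ := by ring

lemma eq_zero_of_unit_mul_eq_mul (hx : HasSubgeometricPowers x) (u : Aˣ)
    (h : u * z = z * x) : z = 0 := by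
  refine hx.eq_zero_of_forall_norm_le (↑u⁻¹ : A) fun n hn => ?_
  have hpow : ↑(u ^ n) * z = z * x ^ n := by
    rw [Units.val_pow_eq_pow_val]; exact (SemiconjBy.pow_right h.symm n).symm
  calc ‖z‖ = ‖↑(u⁻¹ ^ n) * z * x ^ n‖ := by
        rw [mul_assoc, ← hpow, inv_pow, ← mul_assoc, Units.inv_mul, one_mul]
    _ ≤ ‖(↑u⁻¹ : A)‖ ^ n * ‖z‖ * ‖x ^ n‖ := by
        rw [Units.val_pow_eq_pow_val]
        exact (norm_mul₃_le).trans (by gcongr; exact norm_pow_le' _ hn)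
    _ = ‖x ^ n‖ * ‖(↑u⁻¹ : A)‖ ^ n * ‖z‖ := by ring

lemma isUnit_one_sub [CompleteSpace A] (hx : HasSubgeometricPowers x) : IsUnit (1 - x) := by
  obtain ⟨n, hn, hn0⟩ := ((hx (1 / 2) one_half_pos).and (eventually_gt_atTop 0)).exists
  have hlt : ‖x ^ n‖ < 1 :=
    hn.trans_lt (pow_lt_one₀ (by norm_num) (by norm_num) hn0.ne')
  have hcomm : Commute (1 - x) (∑ i ∈ Finset.range n, x ^ i) :=
    (mul_neg_geom_sum x n).trans (geom_sum_mul_neg x n).symm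
  have hunit : IsUnit ((1 - x) * ∑ i ∈ Finset.range n, x ^ i) := by
    rw [mul_neg_geom_sum]; exact (Units.oneSub _ hlt).isUnit
  exact (hcomm.isUnit_mul_iff.mp hunit).1

lemma isQuasinilpotent [CompleteSpace A] (hx : HasSubgeometricPowers x) :
    IsQuasinilpotent x := by
  intro c hc
  simpa only [mul_neg, sub_neg_eq_add] using
    (hx.mul_of_commute (-c) (Commute.neg_right hc.symm)).isUnit_one_sub

end HasSubgeometricPowers

lemma IsQuasinilpotent.spectrum_subset_zero {𝕜 R : Type*} [Field 𝕜] [Ring R] [Algebra 𝕜 R]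
    {x : R} (hx : IsQuasinilpotent x) : spectrum 𝕜 x ⊆ {0} := by
  intro l hl
  by_contra hl0
  replace hl0 : l ≠ 0 := hl0
  have hunit : IsUnit (algebraMap 𝕜 R l * (1 + x * algebraMap 𝕜 R (-l⁻¹))) :=
    ((isUnit_iff_ne_zero.mpr hl0).map _).mul (hx _ (Algebra.commutes _ x))
  have hcancel : algebraMap 𝕜 R l * (x * algebraMap 𝕜 R l⁻¹) = x := by
    rw [← Algebra.commutes, ← mul_assoc, ← map_mul, mul_inv_cancel₀ hl0, map_one, one_mul]
  refine spectrum.notMem_iff.mpr ?_ hl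
  convert hunit using 1
  rw [map_neg, mul_neg, mul_add, mul_neg, hcancel, mul_one, sub_eq_add_neg]

lemma IsQuasinilpotent.hasSubgeometricPowers {A : Type*} [NormedRing A] [NormedAlgebra ℂ A]
    [CompleteSpace A] {x : A} (hx : IsQuasinilpotent x) : HasSubgeometricPowers x := by
  have hr : spectralRadius ℂ x = 0 := by
    refine le_antisymm (iSup₂_le fun k hk => ?_) zero_le
    obtain rfl : k = 0 := hx.spectrum_subset_zero hk
    simp
  have hlim := spectrum.pow_norm_pow_one_div_tendsto_nhds_spectralRadius x
  rw [hr] at hlim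
  intro ε hε
  filter_upwards [hlim.eventually_lt_const (ENNReal.ofReal_pos.mpr hε),
    eventually_gt_atTop 0] with n hn hn0
  rw [ENNReal.ofReal_lt_ofReal_iff hε, one_div] at hn
  calc ‖x ^ n‖ = (‖x ^ n‖ ^ (n⁻¹ : ℝ)) ^ n :=
        (Real.rpow_inv_natCast_pow (norm_nonneg _) hn0.ne').symm
    _ ≤ ε ^ n := pow_le_pow_left₀ (by positivity) hn.le n

section Ring

variable {R : Type*} [Ring R]

lemma IsGHInverse.mul_eq_zero_of_mul_eq_zero {a a' b : R} (ha : IsGHInverse a a')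
    (hab : a * b = 0) (hba : b * a = 0) : a' * b = 0 ∧ b * a' = 0 := by
  have hcomm : a' * b = b * a' := ha.2.1 b (by rw [hba, hab])
  have h : a' * b = 0 :=
    calc a' * b = a' * a * (a' * b) := by rw [← mul_assoc, ha.1]
      _ = a' * (a * b) * a' := by rw [hcomm]; simp only [mul_assoc]
      _ = 0 := by rw [hab, mul_zero, zero_mul]
  exact ⟨h, hcomm ▸ h⟩

lemma sq_sub_mul_mul_sq_sub_mul_eq_zero {a a' b b' : R} (hab : a * b = 0) (ha'b : a' * b = 0) :
    (a ^ 2 - a * a') * (b ^ 2 - b * b') = 0 := by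
  rw [sq, sq, ← mul_sub, ← mul_sub, mul_assoc, ← mul_assoc (a - a'), sub_mul, hab, ha'b,
    sub_zero, zero_mul, mul_zero]

end Ring

section Banach

variable {A : Type*} [NormedRing A] [CompleteSpace A]

lemma Commute.idempotent_of_hasSubgeometricPowers_sub {t p y : A} (hy : Commute y t)
    (hp : IsIdempotentElem p) (htp : Commute t p) (hq : HasSubgeometricPowers (t - p)) :
    Commute y p := by
  have hqp : Commute (t - p) p := htp.sub_left (Commute.refl p)
  have htq : Commute t (1 - p) := (Commute.one_right t).sub_right htp
  have hX : HasSubgeometricPowers (t * (1 - p)) := by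
    have h := hq.mul_of_commute (1 - p) ((Commute.one_right _).sub_right hqp)
    rwa [sub_mul, hp.mul_one_sub_self, sub_zero] at h
  obtain ⟨u, hu⟩ : IsUnit (t * p + (1 - p)) := by
    have h := (hq.mul_of_commute (-p) hqp.neg_right).isUnit_one_sub
    convert h using 1
    rw [mul_neg, sub_neg_eq_add, sub_mul, hp.eq]
    abel
  have hleft : ∀ z, Commute t z → (1 - p) * z = z → z * p = z → z = 0 := by
    intro z htz hqz hzp
    refine hX.eq_zero_of_mul_eq_mul_unit u ?_
    rw [hu, mul_assoc, hqz, mul_add, ← mul_assoc, ← htz.eq, mul_assoc, hzp, mul_sub, mul_one,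
      hzp, sub_self, add_zero]
  have hright : ∀ z, Commute t z → p * z = z → z * (1 - p) = z → z = 0 := by
    intro z htz hpz hzq
    refine hX.eq_zero_of_unit_mul_eq_mul u ?_
    rw [hu, add_mul, mul_assoc, hpz, sub_mul, one_mul, hpz, sub_self, add_zero, ← mul_assoc,
      ← htz.eq, mul_assoc, hzq]
  have h₁ : (1 - p) * y * p = 0 :=
    hleft _ ((htq.mul_right hy.symm).mul_right htp) (by simp only [← mul_assoc, hp.one_sub.eq])
      (by simp only [mul_assoc, hp.eq])
  have h₂ : p * y * (1 - p) = 0 :=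
    hright _ ((htp.mul_right hy.symm).mul_right htq) (by simp only [← mul_assoc, hp.eq])
      (by simp only [mul_assoc, hp.one_sub.eq])
  have h : y * p - p * y = (1 - p) * y * p - p * y * (1 - p) := by noncomm_ring
  rwa [h₁, h₂, sub_zero, sub_eq_zero] at h

lemma inDoubleCommutant_of_commute {x d : A} (hdxd : d * x * d = d) (hxd : Commute x d)
    (hq : HasSubgeometricPowers (x ^ 2 - x * d)) : InDoubleCommutant x d := by
  intro y hy
  have hp : IsIdempotentElem (x * d) := by
    rw [IsIdempotentElem, mul_assoc, ← mul_assoc d, hdxd]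
  have hyp : Commute y (x * d) := Commute.idempotent_of_hasSubgeometricPowers_sub
    (Commute.pow_right hy 2) hp (((Commute.refl x).mul_right hxd).pow_left 2) hq
  calc d * y = d * x * d * y := by rw [hdxd]
    _ = d * (y * (x * d)) := by rw [hyp.eq]; simp only [mul_assoc]
    _ = d * (x * y) * d := by rw [← hy]; simp only [mul_assoc]
    _ = y * (x * d) * d := by rw [hyp.eq, hxd.eq]; simp only [mul_assoc]
    _ = y * d := by rw [mul_assoc, hxd.eq, hdxd]

lemma isGHInverse_of_commute {x d : A} (hdxd : d * x * d = d) (hxd : Commute x d)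
    (hq : HasSubgeometricPowers (x ^ 2 - x * d)) : IsGHInverse x d :=
  ⟨hdxd, inDoubleCommutant_of_commute hdxd hxd hq, hq.isQuasinilpotent⟩

end Banach

theorem stmt18 {A : Type*} [NormedRing A] [NormedAlgebra ℂ A] [CompleteSpace A]
    (a b a' b' : A) (ha : IsGHInverse a a') (hb : IsGHInverse b b')
    (hab : a * b = 0) (hba : b * a = 0) :
    IsGHInverse (a + b) (a' + b') := by
  obtain ⟨ha'b, hba'⟩ := ha.mul_eq_zero_of_mul_eq_zero hab hba
  obtain ⟨hb'a, hab'⟩ := hb.mul_eq_zero_of_mul_eq_zero hba hab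
  have hsd : (a + b) * (a' + b') = a * a' + b * b' := by
    rw [add_mul, mul_add, mul_add, hab', hba', add_zero, zero_add]
  have hds : (a' + b') * (a + b) = a * a' + b * b' := by
    rw [add_mul, mul_add, mul_add, ha'b, hb'a, add_zero, zero_add, ha.2.1 a rfl, hb.2.1 b rfl]
  have hsq : (a + b) ^ 2 - (a + b) * (a' + b') = (a ^ 2 - a * a') + (b ^ 2 - b * b') := by
    rw [hsd, sq, sq, sq, add_mul, mul_add, mul_add, hab, hba]
    abel
  refine isGHInverse_of_commute ?_ (hsd.trans hds.symm) ?_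
  · rw [mul_assoc, hsd, mul_add, add_mul, add_mul, ← mul_assoc a', ← mul_assoc a',
      ← mul_assoc b', ← mul_assoc b', ha.1, hb.1, ha'b, hb'a, zero_mul, zero_mul, add_zero,
      zero_add]
  · rw [hsq]
    exact ha.2.2.hasSubgeometricPowers.add_of_mul_eq_zero hb.2.2.hasSubgeometricPowers
      (sq_sub_mul_mul_sq_sub_mul_eq_zero hab ha'b) (sq_sub_mul_mul_sq_sub_mul_eq_zero hba hb'a)
end

section
/- Let R be a ring and suppose a ∈ R has a generalized Hirano inverse b. Then ab = ba, ab is an idempotent, and (a − a²b)² = a²(1 − ab) · (1 − ab) is quasinilpotent. -/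
theorem stmt19 {R : Type*} [Ring R] (a b : R) (h : IsGHInverse a b) :
    a * b = b * a ∧ (a * b) * (a * b) = a * b ∧
    (a - a ^ 2 * b) ^ 2 = a ^ 2 * (1 - a * b) * (1 - a * b) ∧
    IsQuasinilpotent ((a - a ^ 2 * b) ^ 2) := by
  obtain ⟨hbab, hcom, hq⟩ := h
  have hba : b * a = a * b := hcom a rfl
  have hba' : ∀ x : R, b * (a * x) = a * (b * x) := fun x => by
    rw [← mul_assoc, hba, mul_assoc]
  have hbab' : a * (b * b) = b := by
    rw [← mul_assoc, ← hba, hbab]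
  have hidem : (a * b) * (a * b) = a * b := by
    simp only [mul_assoc, hba, hba', hbab']
  have hd : (a - a ^ 2 * b) ^ 2 = a ^ 2 * (1 - a * b) * (1 - a * b) := by
    simp only [pow_two, mul_sub, sub_mul, mul_one, one_mul, mul_assoc, hba, hba', hbab']
  have hqs : (a^2 - a*b) * (1 - a*b) = a ^ 2 * (1 - a * b) * (1 - a * b) := by
    simp only [pow_two, mul_sub, sub_mul, mul_one, one_mul, mul_assoc, hba, hba', hbab']
    noncomm_ring
  have hsq : (1 - a*b) * (a^2 - a*b) = a ^ 2 * (1 - a * b) * (1 - a * b) := by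
    simp only [pow_two, mul_sub, sub_mul, mul_one, one_mul, mul_assoc, hba, hba', hbab']
    noncomm_ring
  have hsD : (1 - a*b) * (a ^ 2 * (1 - a * b) * (1 - a * b)) =
      a ^ 2 * (1 - a * b) * (1 - a * b) := by
    simp only [pow_two, mul_sub, sub_mul, mul_one, one_mul, mul_assoc, hba, hba', hbab']
    noncomm_ring
  have hDs : (a ^ 2 * (1 - a * b) * (1 - a * b)) * (1 - a*b) =
      a ^ 2 * (1 - a * b) * (1 - a * b) := by
    simp only [pow_two, mul_sub, sub_mul, mul_one, one_mul, mul_assoc, hba, hba', hbab']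
    noncomm_ring
  refine ⟨hba.symm, hidem, hd, ?_⟩
  intro x hx
  rw [hd] at hx ⊢
  set D := a ^ 2 * (1 - a * b) * (1 - a * b) with hD
  set y := (1 - a*b) * x * (1 - a*b) with hy
  have h1 : y * (a^2 - a*b) = x * D := by
    calc y * (a^2 - a*b) = (1 - a*b) * x * ((1 - a*b) * (a^2 - a*b)) := by
          simp only [hy, mul_assoc]
      _ = (1 - a*b) * (x * D) := by rw [hsq, mul_assoc]
      _ = (1 - a*b) * D * x := by rw [hx, ← mul_assoc]
      _ = D * x := by rw [hsD]
      _ = x * D := hx.symm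
  have h2 : (a^2 - a*b) * y = x * D := by
    calc (a^2 - a*b) * y = (a^2 - a*b) * (1 - a*b) * x * (1 - a*b) := by
          rw [hy, ← mul_assoc, ← mul_assoc]
      _ = D * x * (1 - a*b) := by rw [hqs]
      _ = x * (D * (1 - a*b)) := by conv_lhs => rw [← hx, mul_assoc]
      _ = x * D := by rw [hDs]
  have hu := hq y (h1.trans h2.symm)
  rw [h2, hx] at hu
  exact hu
end
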